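/- arXiv:1904.12202 — 7 statements merged into one kernel-verified Lean document; each statement's English description precedes it below -/
import Mathlib

section
/- Let n ≥ 3. The set of reduced words in F that contain no factor of the form x_n q_i for any i ∈ {0,…,n−2} is finite. -/
namespace HK

/-- The generator `x_k` of the free monoid on `ZMod n` (indices taken mod `n`,
so `x_n` is the letter `0`). -/
def fx (n k : ℕ) : FreeMonoid (ZMod n) := FreeMonoid.of (k : ZMod n)

/-- The ascending word `x_a x_{a+1} ⋯ x_b` (empty if `b < a`). -/
def asc (n a b : ℕ) : FreeMonoid (ZMod n) :=
  FreeMonoid.ofList ((List.range' a (b + 1 - a)).map fun k => (k : ZMod n))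

/-- The descending word `x_a x_{a-1} ⋯ x_b` (empty if `a < b`). -/
def desc (n a b : ℕ) : FreeMonoid (ZMod n) :=
  FreeMonoid.ofList (((List.range' b (a + 1 - b)).map fun k => (k : ZMod n)).reverse)

/-- `x_a ⋯ x_b`: ascending if `a ≤ b`, descending otherwise. -/
def seg (n a b : ℕ) : FreeMonoid (ZMod n) := if a ≤ b then asc n a b else desc n a b

/-- The word `q_i = x_1 ⋯ x_i x_{n-1} x_{n-2} ⋯ x_{i+1}`. -/
def qw (n i : ℕ) : FreeMonoid (ZMod n) := asc n 1 i * desc n (n - 1) (i + 1)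

/-- `|u|_c`: the number of occurrences of the letter `c` in the word `u`. -/
def cnt (n : ℕ) (u : FreeMonoid (ZMod n)) (c : ZMod n) : ℕ :=
  (FreeMonoid.toList u).count c

/-- `w` is a factor of `v`. -/
def IsFactor {α : Type*} (w v : FreeMonoid α) : Prop := ∃ v₁ v₂, v = v₁ * w * v₂

/-- A word is reduced if it contains no factor of the forms (1)–(5). -/
def Reduced (n : ℕ) (w : FreeMonoid (ZMod n)) : Prop :=
  (∀ i : ℕ, 1 ≤ i → i ≤ n → ¬ IsFactor (fx n i * fx n i) w) ∧
  (∀ i j : ℕ, 1 ≤ i → j ≤ n → 1 < j - i → j - i < n - 1 →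
      ¬ IsFactor (fx n j * fx n i) w) ∧
  (∀ i j : ℕ, 1 ≤ i → i + 1 < j → j < n - 1 →
      ¬ IsFactor (fx n n * asc n 1 i * fx n j) w) ∧
  (∀ i : ℕ, ∀ u : FreeMonoid (ZMod n), 1 ≤ i → i ≤ n → u ≠ 1 →
      cnt n u (i : ZMod n) = 0 → cnt n u ((i : ZMod n) - 1) = 0 →
      ¬ IsFactor (fx n i * u * fx n i) w) ∧
  (∀ i : ℕ, ∀ u : FreeMonoid (ZMod n), 1 ≤ i → i ≤ n → u ≠ 1 →
      cnt n u (i : ZMod n) = 0 → cnt n u ((i : ZMod n) + 1) = 0 →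
      ¬ IsFactor (fx n i * u * fx n i) w)

/-- Membership in the set `A_i`. -/
def InA (n i : ℕ) (a : FreeMonoid (ZMod n)) : Prop :=
  ∃ (s : ℕ) (k : ℕ → ℕ),
    s ≤ i + 1 ∧
    (1 ≤ s → 1 ≤ k s ∧ k s ≤ s) ∧
    (∀ t, s + 1 ≤ t → t ≤ i + 1 → t < k t ∧ k t ≤ n - 1) ∧
    (∀ t, s + 1 ≤ t → t + 1 ≤ i + 1 → k t < k (t + 1)) ∧
    ∃ p : FreeMonoid (ZMod n),
      p * a = (if s = 0 then 1 else seg n (k s) s) *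
        ((List.range' (s + 1) (i + 1 - s)).map fun t => seg n (k t) t).prod

/-- Membership in the set `B_i`. -/
def InB (n i : ℕ) (b : FreeMonoid (ZMod n)) : Prop :=
  ∃ (r : ℕ) (I J : ℕ → ℕ),
    (∀ t, 1 ≤ t → t ≤ r → 1 ≤ I t ∧ I t < i + 1) ∧
    (∀ t, 1 ≤ t → t + 1 ≤ r → I (t + 1) < I t) ∧
    i + 1 < J 1 ∧
    (∀ t, 1 ≤ t → t + 1 ≤ r + 1 → J t < J (t + 1)) ∧
    J (r + 1) ≤ n ∧
    ∃ p : FreeMonoid (ZMod n),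
      b * p = ((List.range' 1 r).map fun t =>
          fx n n * asc n 1 (I t) * desc n (n - 1) (J t)).prod *
        (fx n n * desc n (n - 1) (J (r + 1)))

/-- The defining relations of the Hecke–Kiselman monoid of the oriented cycle. -/
def cnRel (n : ℕ) : FreeMonoid (ZMod n) → FreeMonoid (ZMod n) → Prop := fun w v =>
  (∃ a : ZMod n, w = FreeMonoid.of a * FreeMonoid.of a ∧ v = FreeMonoid.of a) ∨
  (∃ a b : ZMod n, b ≠ a + 1 ∧ a ≠ b + 1 ∧
    w = FreeMonoid.of a * FreeMonoid.of b ∧ v = FreeMonoid.of b * FreeMonoid.of a) ∨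
  (∃ a : ZMod n,
    (w = FreeMonoid.of a * FreeMonoid.of (a + 1) * FreeMonoid.of a ∨
     w = FreeMonoid.of (a + 1) * FreeMonoid.of a * FreeMonoid.of (a + 1)) ∧
    v = FreeMonoid.of a * FreeMonoid.of (a + 1))

/-- The Hecke–Kiselman monoid `C_n` of the oriented cycle of length `n`. -/
abbrev Cn (n : ℕ) := (conGen (cnRel n)).Quotient

/-- The canonical projection `F → C_n`. -/
def pr (n : ℕ) : FreeMonoid (ZMod n) →* Cn n := (conGen (cnRel n)).mk'

/-- The ideal `I_i` of `C_n`. -/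
def Iset (n i : ℕ) : Set (Cn n) :=
  {w | ¬ ∃ (u v : Cn n) (k : ℕ), 1 ≤ k ∧ u * w * v = (pr n (fx n n * qw n i)) ^ k}




/-- ascending list of letters `a, a+1, …, b` in `ZMod n`. -/
def ascL (n a b : ℕ) : List (ZMod n) := (List.range' a (b + 1 - a)).map (Nat.cast : ℕ → ZMod n)

/-- descending list of letters `a, a-1, …, b` in `ZMod n`. -/
def descL (n a b : ℕ) : List (ZMod n) :=
  ((List.range' b (a + 1 - b)).map (Nat.cast : ℕ → ZMod n)).reverse

lemma ascL_nil {n a b : ℕ} (h : b + 1 ≤ a) : ascL n a b = [] := by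
  unfold ascL; rw [show b + 1 - a = 0 by omega]; simp

lemma ascL_self (n a : ℕ) : ascL n a a = [(a : ZMod n)] := by
  unfold ascL; rw [show a + 1 - a = 1 by omega]; simp

lemma descL_self (n a : ℕ) : descL n a a = [(a : ZMod n)] := by
  unfold descL; rw [show a + 1 - a = 1 by omega]; simp

lemma ascL_concat {n a b : ℕ} (h : a ≤ b + 1) : ascL n a (b+1) = ascL n a b ++ [((b+1 : ℕ) : ZMod n)] := by
  unfold ascL
  rw [show b+1+1-a = (b+1-a)+1 by omega, List.range'_concat, show a + 1*(b+1-a) = b+1 by omega]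
  simp

lemma ascL_last {n t : ℕ} (h : 1 ≤ t) : ascL n 1 t = ascL n 1 (t-1) ++ [(t : ZMod n)] := by
  have h2 := ascL_concat (n := n) (a := 1) (b := t - 1) (by omega)
  rw [show t-1+1 = t by omega] at h2
  exact h2

lemma ascL_split {n a b c : ℕ} (h1 : a ≤ c+1) (h2 : c ≤ b) :
    ascL n a b = ascL n a c ++ ascL n (c+1) b := by
  have h6 := List.range'_append (s := a) (m := c+1-a) (n := b+1-(c+1)) (step := 1)
  rw [show a + 1*(c+1-a) = c+1 by omega, show (c+1-a) + (b+1-(c+1)) = b+1-a by omega] at h6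
  unfold ascL
  rw [← h6, List.map_append]

lemma descL_snoc {n a b : ℕ} (h : b ≤ a) : descL n a b = descL n a (b+1) ++ [(b : ZMod n)] := by
  unfold descL
  rw [show a+1-b = (a-b)+1 by omega, List.range'_succ, show a+1-(b+1) = a-b by omega]
  simp

lemma descL_cons {n a b : ℕ} (h1 : b ≤ a) (h2 : 1 ≤ a) :
    descL n a b = (a : ZMod n) :: descL n (a-1) b := by
  unfold descL
  rw [show a+1-b = (a-b)+1 by omega, List.range'_concat, show b + 1*(a-b) = a by omega,
    show a-1+1-b = a-b by omega]
  simp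

lemma descL_split {n a b c : ℕ} (h1 : b ≤ c) (h2 : c ≤ a+1) (h3 : 1 ≤ c) :
    descL n a b = descL n a c ++ descL n (c-1) b := by
  have h6 := List.range'_append (s := b) (m := c-b) (n := a+1-c) (step := 1)
  rw [show b + 1*(c-b) = c by omega, show (c-b) + (a+1-c) = a+1-b by omega] at h6
  unfold descL
  rw [show c-1+1-b = c-b by omega, ← h6]
  simp

lemma mem_ascL {n a b : ℕ} {x : ZMod n} :
    x ∈ ascL n a b ↔ ∃ k, a ≤ k ∧ k ≤ b ∧ x = (k : ZMod n) := by
  unfold ascL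
  constructor
  · intro hx
    obtain ⟨k, hk, rfl⟩ := List.mem_map.1 hx
    rw [List.mem_range'_1] at hk
    exact ⟨k, hk.1, by omega, rfl⟩
  · rintro ⟨k, hk1, hk2, rfl⟩
    exact List.mem_map.2 ⟨k, List.mem_range'_1.2 ⟨hk1, by omega⟩, rfl⟩

lemma mem_descL {n a b : ℕ} {x : ZMod n} :
    x ∈ descL n a b ↔ ∃ k, b ≤ k ∧ k ≤ a ∧ x = (k : ZMod n) := by
  unfold descL
  rw [List.mem_reverse]
  constructor
  · intro hx
    obtain ⟨k, hk, rfl⟩ := List.mem_map.1 hx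
    rw [List.mem_range'_1] at hk
    exact ⟨k, hk.1, by omega, rfl⟩
  · rintro ⟨k, hk1, hk2, rfl⟩
    exact List.mem_map.2 ⟨k, List.mem_range'_1.2 ⟨hk1, by omega⟩, rfl⟩

lemma ascL_ne_nil {n a b : ℕ} (h : a ≤ b) : ascL n a b ≠ [] := by
  have : ((a:ℕ) : ZMod n) ∈ ascL n a b := mem_ascL.2 ⟨a, le_rfl, h, rfl⟩
  exact List.ne_nil_of_mem this

lemma descL_ne_nil {n a b : ℕ} (h : b ≤ a) : descL n a b ≠ [] := by
  have : ((a:ℕ) : ZMod n) ∈ descL n a b := mem_descL.2 ⟨a, h, le_rfl, rfl⟩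
  exact List.ne_nil_of_mem this

section casts
variable {n : ℕ} [NeZero n]

lemma natCast_val_eq (a : ZMod n) : ((a.val : ℕ) : ZMod n) = a := ZMod.natCast_rightInverse a

lemma cast_inj' {a b : ℕ} (ha : a < n) (hb : b < n) (h : (a : ZMod n) = (b : ZMod n)) : a = b := by
  have h2 := congrArg ZMod.val h
  rwa [ZMod.val_cast_of_lt ha, ZMod.val_cast_of_lt hb] at h2

lemma cast_ne_zero' {a : ℕ} (ha : a < n) (h0 : a ≠ 0) : (a : ZMod n) ≠ 0 := by
  intro h
  exact h0 (cast_inj' ha (Nat.pos_of_ne_zero (NeZero.ne n)) (by simpa using h))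

lemma cast_not_mem_ascL {k a b : ℕ} (hk : k < n) (hb : b < n) (h : k < a ∨ b < k) :
    (k : ZMod n) ∉ ascL n a b := by
  rw [mem_ascL]
  rintro ⟨j, hj1, hj2, hj3⟩
  have hj : j < n := lt_of_le_of_lt hj2 hb
  have := cast_inj' hk hj hj3
  omega

lemma cast_not_mem_descL {k a b : ℕ} (hk : k < n) (ha : a < n) (h : k < b ∨ a < k) :
    (k : ZMod n) ∉ descL n a b := by
  rw [mem_descL]
  rintro ⟨j, hj1, hj2, hj3⟩
  have hj : j < n := lt_of_le_of_lt hj2 ha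
  have := cast_inj' hk hj hj3
  omega

end casts

lemma sub_infix {α : Type*} {X W : List α} (h : X <:+: W) (p Y s : List α)
    (hx : X = p ++ (Y ++ s)) : Y <:+: W :=
  List.IsInfix.trans ⟨p, s, by rw [hx, List.append_assoc]⟩ h

lemma first_split {α : Type*} [DecidableEq α] {c : α} :
    ∀ {l : List α}, c ∈ l → ∃ u t, l = u ++ c :: t ∧ c ∉ u := by
  intro l
  induction l with
  | nil => intro h; cases h
  | cons a l ih =>
    intro h
    by_cases hac : a = c
    · subst hac; exact ⟨[], l, rfl, by simp⟩
    · have hm : c ∈ l := by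
        rcases List.mem_cons.1 h with h1 | h2
        · exact absurd h1.symm hac
        · exact h2
      obtain ⟨u, t, hl, hu⟩ := ih hm
      refine ⟨a :: u, t, by rw [hl]; rfl, ?_⟩
      intro hc
      rcases List.mem_cons.1 hc with h1 | h2
      · exact hac h1.symm
      · exact hu h2


structure Ctx (n : ℕ) (w : List (ZMod n)) : Prop where
  hn : 3 ≤ n
  H1 : ∀ a : ZMod n, ¬ [a, a] <:+: w
  H2 : ∀ i j : ℕ, 1 ≤ i → j ≤ n → 1 < j - i → j - i < n - 1 →
    ¬ [(j : ZMod n), (i : ZMod n)] <:+: w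
  H3 : ∀ i j : ℕ, 1 ≤ i → i + 1 < j → j < n - 1 →
    ¬ ((0 : ZMod n) :: (ascL n 1 i ++ [(j : ZMod n)])) <:+: w
  H4 : ∀ (a : ZMod n) (u : List (ZMod n)), u ≠ [] → a ∉ u → a - 1 ∉ u →
    ¬ ([a] ++ u ++ [a]) <:+: w
  H5 : ∀ (a : ZMod n) (u : List (ZMod n)), u ≠ [] → a ∉ u → a + 1 ∉ u →
    ¬ ([a] ++ u ++ [a]) <:+: w
  HQ : ∀ i : ℕ, i ≤ n - 2 →
    ¬ ((0 : ZMod n) :: (ascL n 1 i ++ descL n (n - 1) (i + 1))) <:+: w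

variable {n : ℕ} {w : List (ZMod n)}

lemma adj0 (C : Ctx n w) {b : ZMod n} (hb : b ≠ 0) (hw : [(0 : ZMod n), b] <:+: w) :
    b.val = 1 ∨ b.val = n - 1 := by
  have hn := C.hn; haveI : NeZero n := ⟨by omega⟩
  by_contra hcon
  push_neg at hcon
  have hv1 : 1 ≤ b.val := by
    have : b.val ≠ 0 := fun h => hb ((ZMod.val_eq_zero b).1 h)
    omega
  have hvn : b.val < n := ZMod.val_lt b
  apply C.H2 b.val n hv1 le_rfl (by omega) (by omega)
  rw [ZMod.natCast_self, natCast_val_eq]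
  exact hw

lemma adjs (C : Ctx n w) {a b : ZMod n} (ha : a ≠ 0) (hw : [a, b] <:+: w) :
    b = 0 ∨ (a.val - 1 ≤ b.val ∧ b ≠ a) := by
  have hn := C.hn; haveI : NeZero n := ⟨by omega⟩
  have hba : b ≠ a := by rintro rfl; exact C.H1 b hw
  by_cases hb0 : b = 0
  · exact Or.inl hb0
  right
  refine ⟨?_, hba⟩
  by_contra hlt
  push_neg at hlt
  have hv1 : 1 ≤ b.val := by
    have : b.val ≠ 0 := fun h => hb0 ((ZMod.val_eq_zero b).1 h)
    omega
  have hvb : b.val < n := ZMod.val_lt b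
  have hva : a.val < n := ZMod.val_lt a
  have hva1 : 1 ≤ a.val := by
    have : a.val ≠ 0 := fun h => ha ((ZMod.val_eq_zero a).1 h)
    omega
  apply C.H2 b.val a.val hv1 (by omega) (by omega) (by omega)
  rw [natCast_val_eq, natCast_val_eq]
  exact hw

lemma desc0 (C : Ctx n w) : ∀ (u : List (ZMod n)) (m : ℕ), 1 ≤ m → m ≤ n - 1 →
    (0 : ZMod n) ∉ u →
    ((0 : ZMod n) :: (descL n (n-1) m ++ (u ++ [(0 : ZMod n)]))) <:+: w → False := by
  have hn := C.hn; haveI : NeZero n := ⟨by omega⟩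
  intro u
  induction u with
  | nil =>
    intro m hm1 hm2 _ hw
    by_cases hm : m = 1
    · subst hm
      apply C.HQ 0 (by omega)
      refine sub_infix hw [] _ [(0 : ZMod n)] ?_
      rw [ascL_nil (by omega)]
      simp
    · apply C.H5 (0 : ZMod n) (descL n (n-1) m) (descL_ne_nil (by omega))
      · rw [show (0 : ZMod n) = ((0 : ℕ) : ZMod n) by norm_cast]
        exact cast_not_mem_descL (by omega) (by omega) (by omega)
      · rw [zero_add, show (1 : ZMod n) = ((1 : ℕ) : ZMod n) by norm_cast]
        exact cast_not_mem_descL (by omega) (by omega) (by omega)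
      · refine sub_infix hw [] _ [] ?_
        simp
  | cons b u' ih =>
    intro m hm1 hm2 h0 hw
    have hb0 : b ≠ 0 := fun h => h0 (by simp [h])
    obtain ⟨v, hvn, rfl⟩ : ∃ v : ℕ, v < n ∧ b = ((v : ℕ) : ZMod n) :=
      ⟨b.val, ZMod.val_lt b, (natCast_val_eq b).symm⟩
    have hv1 : 1 ≤ v := by
      rcases Nat.eq_zero_or_pos v with h | h
      · exact absurd (by rw [h]; norm_cast) hb0
      · exact h
    have hsnoc := descL_snoc (n := n) (a := n-1) (b := m) (by omega)
    have hadj : [((m : ℕ) : ZMod n), ((v : ℕ) : ZMod n)] <:+: w := by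
      refine sub_infix hw ((0 : ZMod n) :: descL n (n-1) (m+1)) _ (u' ++ [(0 : ZMod n)]) ?_
      rw [hsnoc]; simp
    have hmz : ((m : ℕ) : ZMod n) ≠ 0 := cast_ne_zero' (by omega) (by omega)
    rcases adjs C hmz hadj with hb | ⟨hge, hne⟩
    · exact hb0 hb
    rw [ZMod.val_cast_of_lt (by omega : m < n), ZMod.val_cast_of_lt hvn] at hge
    have hvm : v ≠ m := fun h => hne (by rw [h])
    by_cases hcase : v < m
    · -- v = m - 1
      have hbm : v = m - 1 := by omega
      have hm2' : 2 ≤ m := by omega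
      apply ih (m-1) (by omega) (by omega) (fun h => h0 (List.mem_cons_of_mem _ h))
      have hsn : descL n (n-1) (m-1) = descL n (n-1) m ++ [((m-1 : ℕ) : ZMod n)] := by
        have h2 := descL_snoc (n := n) (a := n-1) (b := m-1) (by omega)
        rw [show m-1+1 = m by omega] at h2
        exact h2
      refine sub_infix hw [] _ [] ?_
      rw [hsn, show ((m-1 : ℕ) : ZMod n) = ((v : ℕ) : ZMod n) by rw [hbm]]
      simp
    · -- v > m
      have hgt : m < v := by omega
      apply C.H5 ((v : ℕ) : ZMod n) (descL n (v-1) m) (descL_ne_nil (by omega))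
      · exact cast_not_mem_descL (by omega) (by omega) (by omega)
      · by_cases hx : v = n - 1
        · rw [show ((v : ℕ) : ZMod n) + 1 = ((0 : ℕ) : ZMod n) by
            rw [hx, show ((n-1 : ℕ) : ZMod n) + 1 = ((n : ℕ) : ZMod n) by
              rw [show (n : ℕ) = (n-1)+1 by omega]; push_cast; ring,
              ZMod.natCast_self]; norm_cast]
          exact cast_not_mem_descL (by omega) (by omega) (by omega)
        · rw [show ((v : ℕ) : ZMod n) + 1 = ((v+1 : ℕ) : ZMod n) by push_cast; ring]
          exact cast_not_mem_descL (by omega) (by omega) (by omega)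
      · have hsplit : descL n (n-1) m = descL n (n-1) v ++ descL n (v-1) m :=
          descL_split (by omega) (by omega) (by omega)
        have hsnoc2 : descL n (n-1) v = descL n (n-1) (v+1) ++ [((v : ℕ) : ZMod n)] :=
          descL_snoc (by omega)
        refine sub_infix hw ((0 : ZMod n) :: descL n (n-1) (v+1)) _ (u' ++ [(0 : ZMod n)]) ?_
        rw [hsplit, hsnoc2]
        simp

lemma descA (C : Ctx n w) {i : ℕ} (hi1 : 1 ≤ i) (hi3 : i ≤ n - 3) :
    ∀ (u : List (ZMod n)) (m : ℕ), i + 1 ≤ m → m ≤ n - 1 → (0 : ZMod n) ∉ u →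
    ((0 : ZMod n) :: (ascL n 1 i ++ (descL n (n-1) m ++ (u ++ [(0 : ZMod n)])))) <:+: w →
    ∃ f, i + 2 ≤ f ∧ f ≤ n - 1 ∧ descL n (n-1) m ++ u = descL n (n-1) f := by
  have hn := C.hn; haveI : NeZero n := ⟨by omega⟩
  intro u
  induction u with
  | nil =>
    intro m hm1 hm2 _ hw
    by_cases hm : m = i + 1
    · exfalso
      apply C.HQ i (by omega)
      refine sub_infix hw [] _ [(0 : ZMod n)] ?_
      rw [hm]
      simp
    · exact ⟨m, by omega, hm2, by simp⟩
  | cons b u' ih =>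
    intro m hm1 hm2 h0 hw
    have hb0 : b ≠ 0 := fun h => h0 (by simp [h])
    obtain ⟨v, hvn, rfl⟩ : ∃ v : ℕ, v < n ∧ b = ((v : ℕ) : ZMod n) :=
      ⟨b.val, ZMod.val_lt b, (natCast_val_eq b).symm⟩
    have hv1 : 1 ≤ v := by
      rcases Nat.eq_zero_or_pos v with h | h
      · exact absurd (by rw [h]; norm_cast) hb0
      · exact h
    have hsnoc := descL_snoc (n := n) (a := n-1) (b := m) (by omega)
    have hadj : [((m : ℕ) : ZMod n), ((v : ℕ) : ZMod n)] <:+: w := by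
      refine sub_infix hw ((0 : ZMod n) :: (ascL n 1 i ++ descL n (n-1) (m+1))) _
        (u' ++ [(0 : ZMod n)]) ?_
      rw [hsnoc]; simp
    have hmz : ((m : ℕ) : ZMod n) ≠ 0 := cast_ne_zero' (by omega) (by omega)
    rcases adjs C hmz hadj with hb | ⟨hge, hne⟩
    · exact (hb0 hb).elim
    rw [ZMod.val_cast_of_lt (by omega : m < n), ZMod.val_cast_of_lt hvn] at hge
    have hvm : v ≠ m := fun h => hne (by rw [h])
    by_cases hcase : v < m
    · -- v = m - 1
      have hbm : v = m - 1 := by omega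
      by_cases hmi : m = i + 1
      · -- descent hits i : H4 contradiction
        exfalso
        have hasc : ascL n 1 i = ascL n 1 (i-1) ++ [((i : ℕ) : ZMod n)] := ascL_last hi1
        apply C.H4 ((i : ℕ) : ZMod n) (descL n (n-1) (i+1)) (descL_ne_nil (by omega))
        · exact cast_not_mem_descL (by omega) (by omega) (by omega)
        · rw [show ((i : ℕ) : ZMod n) - 1 = ((i-1 : ℕ) : ZMod n) by
            rw [show (i : ℕ) = (i-1)+1 by omega]; push_cast; ring]
          exact cast_not_mem_descL (by omega) (by omega) (by omega)
        · refine sub_infix hw ((0 : ZMod n) :: ascL n 1 (i-1)) _ (u' ++ [(0 : ZMod n)]) ?_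
          rw [hasc, hmi, show ((v : ℕ) : ZMod n) = ((i : ℕ) : ZMod n) by rw [show v = i by omega]]
          simp
      · -- continue descent
        have hsn : descL n (n-1) (m-1) = descL n (n-1) m ++ [((m-1 : ℕ) : ZMod n)] := by
          have h2 := descL_snoc (n := n) (a := n-1) (b := m-1) (by omega)
          rw [show m-1+1 = m by omega] at h2
          exact h2
        obtain ⟨f, hf1, hf2, heq⟩ := ih (m-1) (by omega) (by omega)
          (fun h => h0 (List.mem_cons_of_mem _ h))
          (by
            refine sub_infix hw [] _ [] ?_
            rw [hsn, show ((m-1 : ℕ) : ZMod n) = ((v : ℕ) : ZMod n) by rw [hbm]]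
            simp)
        refine ⟨f, hf1, hf2, ?_⟩
        rw [show ((v : ℕ) : ZMod n) = ((m-1 : ℕ) : ZMod n) by rw [hbm], ← heq, hsn]
        simp
    · -- v > m : H5 contradiction
      exfalso
      have hgt : m < v := by omega
      apply C.H5 ((v : ℕ) : ZMod n) (descL n (v-1) m) (descL_ne_nil (by omega))
      · exact cast_not_mem_descL (by omega) (by omega) (by omega)
      · by_cases hx : v = n - 1
        · rw [show ((v : ℕ) : ZMod n) + 1 = ((0 : ℕ) : ZMod n) by
            rw [hx, show ((n-1 : ℕ) : ZMod n) + 1 = ((n : ℕ) : ZMod n) by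
              rw [show (n : ℕ) = (n-1)+1 by omega]; push_cast; ring,
              ZMod.natCast_self]; norm_cast]
          exact cast_not_mem_descL (by omega) (by omega) (by omega)
        · rw [show ((v : ℕ) : ZMod n) + 1 = ((v+1 : ℕ) : ZMod n) by push_cast; ring]
          exact cast_not_mem_descL (by omega) (by omega) (by omega)
      · have hsplit : descL n (n-1) m = descL n (n-1) v ++ descL n (v-1) m :=
          descL_split (by omega) (by omega) (by omega)
        have hsnoc2 : descL n (n-1) v = descL n (n-1) (v+1) ++ [((v : ℕ) : ZMod n)] :=
          descL_snoc (by omega)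
        refine sub_infix hw ((0 : ZMod n) :: (ascL n 1 i ++ descL n (n-1) (v+1))) _
          (u' ++ [(0 : ZMod n)]) ?_
        rw [hsplit, hsnoc2]
        simp

lemma ascA (C : Ctx n w) : ∀ (u : List (ZMod n)) (t : ℕ), 1 ≤ t → t ≤ n - 1 →
    (0 : ZMod n) ∉ u →
    ((0 : ZMod n) :: (ascL n 1 t ++ (u ++ [(0 : ZMod n)]))) <:+: w →
    ∃ i f, t ≤ i ∧ i + 2 ≤ f ∧ f ≤ n - 1 ∧ ascL n 1 t ++ u = ascL n 1 i ++ descL n (n-1) f := by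
  have hn := C.hn; haveI : NeZero n := ⟨by omega⟩
  intro u
  induction u with
  | nil =>
    intro t ht1 ht2 _ hw
    exfalso
    by_cases ht : t = n - 1
    · apply C.HQ (n-2) (by omega)
      refine sub_infix hw [] _ [(0 : ZMod n)] ?_
      have h2 : ascL n 1 (n-1) = ascL n 1 (n-2) ++ [((n-1 : ℕ) : ZMod n)] := by
        have h3 := ascL_concat (n := n) (a := 1) (b := n-2) (by omega)
        rw [show n-2+1 = n-1 by omega] at h3
        exact h3
      rw [ht, h2, show n-2+1 = n-1 by omega, descL_self]
      simp
    · apply C.H4 (0 : ZMod n) (ascL n 1 t) (ascL_ne_nil ht1)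
      · rw [show (0 : ZMod n) = ((0 : ℕ) : ZMod n) by norm_cast]
        exact cast_not_mem_ascL (by omega) (by omega) (by omega)
      · rw [show (0 : ZMod n) - 1 = ((n-1 : ℕ) : ZMod n) by
          rw [show ((n-1 : ℕ) : ZMod n) = ((n : ℕ) : ZMod n) - 1 by
            rw [show (n : ℕ) = (n-1)+1 by omega]; push_cast; ring]
          rw [ZMod.natCast_self]]
        exact cast_not_mem_ascL (by omega) (by omega) (by omega)
      · refine sub_infix hw [] _ [] ?_
        simp
  | cons b u' ih =>
    intro t ht1 ht2 h0 hw
    have hb0 : b ≠ 0 := fun h => h0 (by simp [h])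
    obtain ⟨v, hvn, rfl⟩ : ∃ v : ℕ, v < n ∧ b = ((v : ℕ) : ZMod n) :=
      ⟨b.val, ZMod.val_lt b, (natCast_val_eq b).symm⟩
    have hv1 : 1 ≤ v := by
      rcases Nat.eq_zero_or_pos v with h | h
      · exact absurd (by rw [h]; norm_cast) hb0
      · exact h
    have hlastt : ascL n 1 t = ascL n 1 (t-1) ++ [((t : ℕ) : ZMod n)] := ascL_last ht1
    have hadj : [((t : ℕ) : ZMod n), ((v : ℕ) : ZMod n)] <:+: w := by
      refine sub_infix hw ((0 : ZMod n) :: ascL n 1 (t-1)) _ (u' ++ [(0 : ZMod n)]) ?_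
      rw [hlastt]; simp
    have htz : ((t : ℕ) : ZMod n) ≠ 0 := cast_ne_zero' (by omega) (by omega)
    rcases adjs C htz hadj with hb | ⟨hge, hne⟩
    · exact (hb0 hb).elim
    rw [ZMod.val_cast_of_lt (by omega : t < n), ZMod.val_cast_of_lt hvn] at hge
    have hvt : v ≠ t := fun h => hne (by rw [h])
    rcases show (2 ≤ t ∧ v = t - 1) ∨ v = t + 1 ∨ t + 2 ≤ v by omega with ⟨ht2', hbm⟩ | hbm | hbm
    · -- zig-zag : H4 contradiction
      exfalso
      have hasc2 : ascL n 1 (t-1) = ascL n 1 (t-2) ++ [((t-1 : ℕ) : ZMod n)] := by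
        have h3 := ascL_last (n := n) (t := t-1) (by omega)
        rw [show t-1-1 = t-2 by omega] at h3
        exact h3
      apply C.H4 ((t-1 : ℕ) : ZMod n) [((t : ℕ) : ZMod n)] (by simp)
      · intro hmem
        rw [List.mem_singleton] at hmem
        have := cast_inj' (by omega : t-1 < n) (by omega : t < n) hmem
        omega
      · rw [show ((t-1 : ℕ) : ZMod n) - 1 = ((t-2 : ℕ) : ZMod n) by
          rw [show (t-1 : ℕ) = (t-2)+1 by omega]; push_cast; ring]
        intro hmem
        rw [List.mem_singleton] at hmem
        have := cast_inj' (by omega : t-2 < n) (by omega : t < n) hmem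
        omega
      · refine sub_infix hw ((0 : ZMod n) :: ascL n 1 (t-2)) _ (u' ++ [(0 : ZMod n)]) ?_
        rw [hlastt, hasc2, show ((v : ℕ) : ZMod n) = ((t-1 : ℕ) : ZMod n) by rw [hbm]]
        simp
    · -- continue ascent
      have hvn1 : t + 1 ≤ n - 1 := by omega
      have hconc : ascL n 1 (t+1) = ascL n 1 t ++ [((t+1 : ℕ) : ZMod n)] :=
        ascL_concat (by omega)
      obtain ⟨i, f, hti, hif, hfn, heq⟩ := ih (t+1) (by omega) hvn1
        (fun h => h0 (List.mem_cons_of_mem _ h))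
        (by
          refine sub_infix hw [] _ [] ?_
          rw [hconc, show ((t+1 : ℕ) : ZMod n) = ((v : ℕ) : ZMod n) by rw [hbm]]
          simp)
      refine ⟨i, f, by omega, hif, hfn, ?_⟩
      rw [show ((v : ℕ) : ZMod n) = ((t+1 : ℕ) : ZMod n) by rw [hbm], ← heq, hconc]
      simp
    · -- jump up: must be n-1
      have hv9 : v = n - 1 := by
        by_contra hv9
        apply C.H3 t v ht1 (by omega) (by omega)
        refine sub_infix hw [] _ (u' ++ [(0 : ZMod n)]) ?_
        simp
      have ht3 : t ≤ n - 3 := by omega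
      obtain ⟨f, hf1, hf2, heq⟩ := descA C ht1 ht3 u' (n-1) (by omega) le_rfl
        (fun h => h0 (List.mem_cons_of_mem _ h))
        (by
          refine sub_infix hw [] _ [] ?_
          rw [descL_self, show ((n-1 : ℕ) : ZMod n) = ((v : ℕ) : ZMod n) by rw [hv9]]
          simp)
      refine ⟨t, f, le_rfl, hf1, hf2, ?_⟩
      rw [show ((v : ℕ) : ZMod n) = ((n-1 : ℕ) : ZMod n) by rw [hv9], ← heq, descL_self]
      simp

lemma gap (C : Ctx n w) (u : List (ZMod n)) (h0 : (0 : ZMod n) ∉ u)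
    (hw : ((0 : ZMod n) :: (u ++ [(0 : ZMod n)])) <:+: w) :
    ∃ i f, 1 ≤ i ∧ i + 2 ≤ f ∧ f ≤ n - 1 ∧ u = ascL n 1 i ++ descL n (n-1) f := by
  have hn := C.hn; haveI : NeZero n := ⟨by omega⟩
  cases u with
  | nil => exact absurd (by simpa using hw) (C.H1 0)
  | cons b u' =>
    have hb0 : b ≠ 0 := fun h => h0 (by simp [h])
    obtain ⟨v, hvn, rfl⟩ : ∃ v : ℕ, v < n ∧ b = ((v : ℕ) : ZMod n) :=
      ⟨b.val, ZMod.val_lt b, (natCast_val_eq b).symm⟩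
    have hadj : [(0 : ZMod n), ((v : ℕ) : ZMod n)] <:+: w :=
      sub_infix hw [] _ (u' ++ [(0 : ZMod n)]) (by simp)
    rcases adj0 C hb0 hadj with h1 | h1 <;> rw [ZMod.val_cast_of_lt hvn] at h1
    · -- starts with 1
      obtain ⟨i, f, hti, hif, hfn, heq⟩ := ascA C u' 1 le_rfl (by omega)
        (fun h => h0 (List.mem_cons_of_mem _ h))
        (by
          refine sub_infix hw [] _ [] ?_
          rw [ascL_self, show ((1 : ℕ) : ZMod n) = ((v : ℕ) : ZMod n) by rw [h1]]
          simp)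
      refine ⟨i, f, by omega, hif, hfn, ?_⟩
      rw [show ((v : ℕ) : ZMod n) = ((1 : ℕ) : ZMod n) by rw [h1], ← heq, ascL_self]
      simp
    · -- starts with n-1 : impossible
      exfalso
      apply desc0 C u' (n-1) (by omega) le_rfl (fun h => h0 (List.mem_cons_of_mem _ h))
      refine sub_infix hw [] _ [] ?_
      rw [descL_self, show ((n-1 : ℕ) : ZMod n) = ((v : ℕ) : ZMod n) by rw [h1]]
      simp

variable {n : ℕ} {w : List (ZMod n)}

lemma mono (C : Ctx n w) {i₁ f₁ i₂ f₂ : ℕ} (h11 : 1 ≤ i₁) (h12 : i₁ + 2 ≤ f₁)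
    (h13 : f₁ ≤ n - 1) (h21 : 1 ≤ i₂) (h22 : i₂ + 2 ≤ f₂) (h23 : f₂ ≤ n - 1)
    (hw2 : ((0 : ZMod n) :: (ascL n 1 i₁ ++ descL n (n-1) f₁ ++
      ((0 : ZMod n) :: (ascL n 1 i₂ ++ descL n (n-1) f₂ ++ [(0 : ZMod n)])))) <:+: w) :
    i₂ < i₁ := by
  have hn := C.hn; haveI : NeZero n := ⟨by omega⟩
  by_contra hcon
  push_neg at hcon
  apply C.H5 ((i₁ : ℕ) : ZMod n) (descL n (n-1) f₁ ++ ((0 : ZMod n) :: ascL n 1 (i₁-1)))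
  · intro h
    rw [List.append_eq_nil_iff] at h
    exact List.cons_ne_nil _ _ h.2
  · intro hmem
    rcases List.mem_append.1 hmem with h | h
    · exact (cast_not_mem_descL (by omega) (by omega) (by omega)) h
    rcases List.mem_cons.1 h with h | h
    · exact (cast_ne_zero' (by omega) (by omega)) h
    · exact (cast_not_mem_ascL (by omega) (by omega) (by omega)) h
  · rw [show ((i₁ : ℕ) : ZMod n) + 1 = ((i₁+1 : ℕ) : ZMod n) by push_cast; ring]
    intro hmem
    rcases List.mem_append.1 hmem with h | h
    · exact (cast_not_mem_descL (by omega) (by omega) (by omega)) h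
    rcases List.mem_cons.1 h with h | h
    · exact (cast_ne_zero' (by omega) (by omega)) h
    · exact (cast_not_mem_ascL (by omega) (by omega) (by omega)) h
  · have e1 : ascL n 1 i₂ = ascL n 1 i₁ ++ ascL n (i₁+1) i₂ := ascL_split (by omega) hcon
    have e2 : ascL n 1 i₁ = ascL n 1 (i₁-1) ++ [((i₁ : ℕ) : ZMod n)] := ascL_last h11
    refine sub_infix hw2 ((0 : ZMod n) :: ascL n 1 (i₁-1)) _
      (ascL n (i₁+1) i₂ ++ (descL n (n-1) f₂ ++ [(0 : ZMod n)])) ?_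
    rw [e1, e2]
    simp

lemma key (C : Ctx n w) : ∀ (N : ℕ) (l : List (ZMod n)), ((0 : ZMod n) :: l) <:+: w →
    (∀ u l', l = u ++ (0 : ZMod n) :: l' → (0 : ZMod n) ∉ u →
      ∃ i f, i ≤ N ∧ 1 ≤ i ∧ i + 2 ≤ f ∧ f ≤ n - 1 ∧ u = ascL n 1 i ++ descL n (n-1) f) →
    l.count (0 : ZMod n) ≤ N := by
  have hn := C.hn
  intro N
  induction N using Nat.strong_induction_on with
  | _ N ih =>
    intro l hl hgap
    by_cases h0 : (0 : ZMod n) ∈ l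
    · obtain ⟨u, t, hlut, hu⟩ := first_split h0
      subst hlut
      obtain ⟨i, f, hiN, hi1, hif, hfn, hshape⟩ := hgap u t rfl hu
      have hl' : ((0 : ZMod n) :: t) <:+: w :=
        sub_infix hl ((0 : ZMod n) :: u) _ [] (by simp)
      have hcount : t.count (0 : ZMod n) ≤ i - 1 := by
        apply ih (i-1) (by omega) t hl'
        intro u₂ l₂ hteq hu₂
        subst hteq
        have hg2 : ((0 : ZMod n) :: (u₂ ++ [(0 : ZMod n)])) <:+: w :=
          sub_infix hl' [] _ l₂ (by simp)
        obtain ⟨i₂, f₂, hi₂, hif₂, hf₂, hsh₂⟩ := gap C u₂ hu₂ hg2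
        have hw2 : ((0 : ZMod n) :: (ascL n 1 i ++ descL n (n-1) f ++
            ((0 : ZMod n) :: (ascL n 1 i₂ ++ descL n (n-1) f₂ ++ [(0 : ZMod n)])))) <:+: w := by
          refine sub_infix hl [] _ l₂ ?_
          rw [hshape, hsh₂]
          simp
        have hmono : i₂ < i := mono C hi1 hif hfn hi₂ hif₂ hf₂ hw2
        exact ⟨i₂, f₂, by omega, hi₂, hif₂, hf₂, hsh₂⟩
      have hcu : u.count (0 : ZMod n) = 0 := List.count_eq_zero_of_not_mem hu
      rw [List.count_append, List.count_cons_self, hcu]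
      omega
    · rw [List.count_eq_zero_of_not_mem h0]
      exact Nat.zero_le _

lemma count0 (C : Ctx n w) : w.count (0 : ZMod n) ≤ n - 2 := by
  have hn := C.hn
  by_cases h0 : (0 : ZMod n) ∈ w
  · obtain ⟨u, t, hw0, hu⟩ := first_split h0
    have hl : ((0 : ZMod n) :: t) <:+: w := ⟨u, [], by rw [hw0]; simp⟩
    have hc : t.count (0 : ZMod n) ≤ n - 3 := by
      apply key C (n-3) t hl
      intro u₂ l₂ hteq hu₂
      have hg2 : ((0 : ZMod n) :: (u₂ ++ [(0 : ZMod n)])) <:+: w :=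
        sub_infix hl [] _ l₂ (by rw [hteq]; simp)
      obtain ⟨i, f, hi1, hif, hfn, hsh⟩ := gap C u₂ hu₂ hg2
      exact ⟨i, f, by omega, hi1, hif, hfn, hsh⟩
    have h2 : w.count (0 : ZMod n) = u.count (0 : ZMod n) + (t.count (0 : ZMod n) + 1) := by
      rw [hw0, List.count_append, List.count_cons_self]
    rw [List.count_eq_zero_of_not_mem hu] at h2
    omega
  · rw [List.count_eq_zero_of_not_mem h0]
    exact Nat.zero_le _

lemma count_aux (C : Ctx n w) {c d : ZMod n} (hdc : d ≠ c)
    (hP : ∀ u : List (ZMod n), ([c] ++ u ++ [c]) <:+: w → c ∉ u → d ∈ u) :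
    ∀ (N : ℕ) (l : List (ZMod n)), l.length ≤ N → (c :: l) <:+: w →
      l.count c ≤ l.count d := by
  intro N
  induction N with
  | zero =>
    intro l hlen _
    have : l = [] := List.eq_nil_of_length_eq_zero (by omega)
    subst this
    simp
  | succ N ihN =>
    intro l hlen hcl
    by_cases hc : c ∈ l
    · obtain ⟨u, t, hl, hu⟩ := first_split hc
      subst hl
      have hinf : ([c] ++ u ++ [c]) <:+: w := sub_infix hcl [] _ t (by simp)
      have hd : d ∈ u := hP u hinf hu
      have hct : (c :: t) <:+: w := sub_infix hcl (c :: u) _ [] (by simp)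
      have hlen2 : t.length ≤ N := by
        rw [List.length_append, List.length_cons] at hlen
        omega
      have hih := ihN t hlen2 hct
      have hcu : u.count c = 0 := List.count_eq_zero_of_not_mem hu
      have hdu : 1 ≤ u.count d := List.count_pos_iff.2 hd
      rw [List.count_append, List.count_append, List.count_cons_self,
        List.count_cons_of_ne hdc.symm, hcu]
      omega
    · rw [List.count_eq_zero_of_not_mem hc]
      exact Nat.zero_le _

lemma count_chain (C : Ctx n w) {c d : ZMod n} (hdc : d ≠ c)
    (hP : ∀ u : List (ZMod n), ([c] ++ u ++ [c]) <:+: w → c ∉ u → d ∈ u) :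
    w.count c ≤ w.count d + 1 := by
  by_cases hc : c ∈ w
  · obtain ⟨u, t, hw0, hu⟩ := first_split hc
    have hct : (c :: t) <:+: w := ⟨u, [], by rw [hw0]; simp⟩
    have h1 := count_aux C hdc hP t.length t le_rfl hct
    have hts : t.Sublist w := by
      rw [hw0]
      exact ((List.sublist_cons_self c t).trans (List.sublist_append_right u (c :: t)))
    have h2 : t.count d ≤ w.count d := hts.count_le d
    have h3 : w.count c = u.count c + (t.count c + 1) := by
      rw [hw0, List.count_append, List.count_cons_self]
    rw [List.count_eq_zero_of_not_mem hu] at h3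
    omega
  · rw [List.count_eq_zero_of_not_mem hc]
    exact Nat.zero_le _

lemma count_letter (C : Ctx n w) : ∀ j : ℕ, w.count ((j : ℕ) : ZMod n) ≤ (n - 2) + j := by
  have hn := C.hn; haveI : NeZero n := ⟨by omega⟩
  intro j
  induction j with
  | zero => simpa using count0 C
  | succ j ihj =>
    have hd : ((j+1 : ℕ) : ZMod n) - 1 = ((j : ℕ) : ZMod n) := by push_cast; ring
    have hdc : ((j+1 : ℕ) : ZMod n) - 1 ≠ ((j+1 : ℕ) : ZMod n) := by
      intro h
      have h3 := sub_eq_iff_eq_add.1 h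
      have h2 : (1 : ZMod n) = 0 := (left_eq_add.1 h3)
      haveI : Fact (1 < n) := ⟨by omega⟩
      exact one_ne_zero h2
    have hP : ∀ u : List (ZMod n), ([((j+1 : ℕ) : ZMod n)] ++ u ++ [((j+1 : ℕ) : ZMod n)]) <:+: w →
        ((j+1 : ℕ) : ZMod n) ∉ u → (((j+1 : ℕ) : ZMod n) - 1) ∈ u := by
      intro u hinf hcu
      by_contra hdu
      by_cases hu0 : u = []
      · subst hu0
        exact C.H1 ((j+1 : ℕ) : ZMod n) (by simpa using hinf)
      · exact C.H4 ((j+1 : ℕ) : ZMod n) u hu0 hcu hdu hinf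
    have h1 := count_chain C hdc hP
    rw [hd] at h1
    omega

lemma length_bound (C : Ctx n w) : w.length ≤ n * (2 * n) := by
  have hn := C.hn; haveI : NeZero n := ⟨by omega⟩
  classical
  have hcnt : ∀ a : ZMod n, w.count a ≤ 2 * n := by
    intro a
    have h1 := count_letter C a.val
    rw [natCast_val_eq] at h1
    have h2 : a.val < n := ZMod.val_lt a
    omega
  have h1 : (Multiset.ofList w).card = w.length := by simp
  have h2 : ∑ a ∈ (Multiset.ofList w).toFinset, (Multiset.ofList w).count a
      = (Multiset.ofList w).card := Multiset.toFinset_sum_count_eq _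
  have h3 : ∀ a ∈ (Multiset.ofList w).toFinset, (Multiset.ofList w).count a ≤ 2 * n := by
    intro a _
    have : (Multiset.ofList w).count a = w.count a := by simp
    rw [this]
    exact hcnt a
  have h4 := Finset.sum_le_card_nsmul _ _ (2 * n) h3
  rw [smul_eq_mul] at h4
  have h5 : (Multiset.ofList w).toFinset.card ≤ n := by
    have h6 := Finset.card_le_univ (Multiset.ofList w).toFinset
    rwa [ZMod.card] at h6
  have h7 : (Multiset.ofList w).toFinset.card * (2 * n) ≤ n * (2 * n) :=
    Nat.mul_le_mul_right _ h5
  omega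


lemma isFactor_iff {α : Type*} (u v : FreeMonoid α) :
    IsFactor u v ↔ (FreeMonoid.toList u) <:+: (FreeMonoid.toList v) := by
  constructor
  · rintro ⟨p, s, rfl⟩
    exact ⟨FreeMonoid.toList p, FreeMonoid.toList s, by simp [FreeMonoid.toList_mul]⟩
  · rintro ⟨p, s, h⟩
    refine ⟨FreeMonoid.ofList p, FreeMonoid.ofList s, ?_⟩
    apply FreeMonoid.toList.injective
    simp [FreeMonoid.toList_mul, FreeMonoid.toList_ofList, ← h]

lemma toList_asc (n a b : ℕ) : FreeMonoid.toList (asc n a b) = ascL n a b := by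
  show FreeMonoid.toList (FreeMonoid.ofList _) = _
  rw [FreeMonoid.toList_ofList]
  unfold ascL
  generalize (List.range' a (b+1-a)) = l
  induction l with
  | nil => rfl
  | cons x l ihl => simpa using ihl

lemma toList_desc (n a b : ℕ) : FreeMonoid.toList (desc n a b) = descL n a b := by
  show FreeMonoid.toList (FreeMonoid.ofList _) = _
  rw [FreeMonoid.toList_ofList]
  unfold descL
  rw [List.reverse_inj]
  generalize (List.range' b (a+1-b)) = l
  induction l with
  | nil => rfl
  | cons x l ihl => simpa using ihl

lemma rep_exists {n : ℕ} [NeZero n] (a : ZMod n) :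
    ∃ i : ℕ, 1 ≤ i ∧ i ≤ n ∧ ((i : ℕ) : ZMod n) = a := by
  by_cases h : a = 0
  · exact ⟨n, Nat.pos_of_ne_zero (NeZero.ne n), le_rfl, by rw [ZMod.natCast_self]; exact h.symm⟩
  · refine ⟨a.val, ?_, (ZMod.val_lt a).le, natCast_val_eq a⟩
    have : a.val ≠ 0 := fun hh => h ((ZMod.val_eq_zero a).1 hh)
    omega

theorem stmt1' (n : ℕ) (hn : 3 ≤ n) :
    {w : FreeMonoid (ZMod n) | Reduced n w ∧
      ∀ i : ℕ, i ≤ n - 2 → ¬ IsFactor (fx n n * qw n i) w}.Finite := by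
  haveI : NeZero n := ⟨by omega⟩
  have hfin : {l : List (ZMod n) | l.length ≤ n * (2 * n)}.Finite :=
    List.finite_length_le _ _
  have hpre : ((fun (w : FreeMonoid (ZMod n)) => FreeMonoid.toList w) ⁻¹'
      {l | l.length ≤ n * (2 * n)}).Finite := by
    apply hfin.preimage
    intro x _ y _ hxy
    exact FreeMonoid.toList.injective hxy
  apply hpre.subset
  rintro w ⟨hred, hq⟩
  obtain ⟨r1, r2, r3, r4, r5⟩ := hred
  have C : Ctx n (FreeMonoid.toList w) := by
    refine ⟨hn, ?_, ?_, ?_, ?_, ?_, ?_⟩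
    · -- H1
      intro a hinf
      obtain ⟨i, hi1, hi2, hia⟩ := rep_exists a
      apply r1 i hi1 hi2
      rw [isFactor_iff]
      have he : FreeMonoid.toList (fx n i * fx n i) = [a, a] := by
        simp [fx, FreeMonoid.toList_mul, FreeMonoid.toList_of, hia]
      rw [he]
      exact hinf
    · -- H2
      intro i j hi hj h1 h2 hinf
      apply r2 i j hi hj h1 h2
      rw [isFactor_iff]
      have he : FreeMonoid.toList (fx n j * fx n i) = [((j : ℕ) : ZMod n), ((i : ℕ) : ZMod n)] := by
        simp [fx, FreeMonoid.toList_mul, FreeMonoid.toList_of]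
      rw [he]
      exact hinf
    · -- H3
      intro i j hi hij hj hinf
      apply r3 i j hi hij hj
      rw [isFactor_iff]
      have he : FreeMonoid.toList (fx n n * asc n 1 i * fx n j)
          = (0 : ZMod n) :: (ascL n 1 i ++ [((j : ℕ) : ZMod n)]) := by
        simp [fx, FreeMonoid.toList_mul, FreeMonoid.toList_of, toList_asc, ZMod.natCast_self]
      rw [he]
      exact hinf
    · -- H4
      intro a u hune hau hau1 hinf
      obtain ⟨i, hi1, hi2, hia⟩ := rep_exists a
      apply r4 i (FreeMonoid.ofList u) hi1 hi2
      · intro h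
        apply hune
        have h2 := congrArg FreeMonoid.toList h
        simpa using h2
      · show cnt n (FreeMonoid.ofList u) _ = 0
        unfold cnt
        rw [FreeMonoid.toList_ofList, hia]
        exact List.count_eq_zero.2 hau
      · show cnt n (FreeMonoid.ofList u) _ = 0
        unfold cnt
        rw [FreeMonoid.toList_ofList, hia]
        exact List.count_eq_zero.2 hau1
      · rw [isFactor_iff]
        have he : FreeMonoid.toList (fx n i * FreeMonoid.ofList u * fx n i)
            = [a] ++ u ++ [a] := by
          simp [fx, FreeMonoid.toList_mul, FreeMonoid.toList_of, FreeMonoid.toList_ofList, hia]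
        rw [he]
        exact hinf
    · -- H5
      intro a u hune hau hau1 hinf
      obtain ⟨i, hi1, hi2, hia⟩ := rep_exists a
      apply r5 i (FreeMonoid.ofList u) hi1 hi2
      · intro h
        apply hune
        have h2 := congrArg FreeMonoid.toList h
        simpa using h2
      · show cnt n (FreeMonoid.ofList u) _ = 0
        unfold cnt
        rw [FreeMonoid.toList_ofList, hia]
        exact List.count_eq_zero.2 hau
      · show cnt n (FreeMonoid.ofList u) _ = 0
        unfold cnt
        rw [FreeMonoid.toList_ofList, hia]
        exact List.count_eq_zero.2 hau1
      · rw [isFactor_iff]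
        have he : FreeMonoid.toList (fx n i * FreeMonoid.ofList u * fx n i)
            = [a] ++ u ++ [a] := by
          simp [fx, FreeMonoid.toList_mul, FreeMonoid.toList_of, FreeMonoid.toList_ofList, hia]
        rw [he]
        exact hinf
    · -- HQ
      intro i hi hinf
      apply hq i hi
      rw [isFactor_iff]
      have he : FreeMonoid.toList (fx n n * qw n i)
          = (0 : ZMod n) :: (ascL n 1 i ++ descL n (n-1) (i+1)) := by
        simp [fx, qw, FreeMonoid.toList_mul, FreeMonoid.toList_of, toList_asc, toList_desc,
          ZMod.natCast_self]
      rw [he]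
      exact hinf
  exact length_bound C


/-- Proposition 2.10 (stw1): there are only finitely many reduced words containing
no factor `x_n q_i`, `0 ≤ i ≤ n - 2`. -/
theorem stmt1 (n : ℕ) (hn : 3 ≤ n) :
    {w : FreeMonoid (ZMod n) | Reduced n w ∧
      ∀ i : ℕ, i ≤ n - 2 → ¬ IsFactor (fx n n * qw n i) w}.Finite :=
  stmt1' n hn

end HK
end

section
/- Let n ≥ 3. If w = x_{n−1} u is a reduced word in F with |u|_n = 0, then w = x_{n−1} x_{n−2} ⋯ x_k for some 1 ≤ k ≤ n−1. -/
namespace HK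

section Lem1

lemma coeList (n : ℕ) (l : List ℕ) :
    ((l.map fun k => (k : ZMod n)) : List (ZMod n)) = l.map (fun a : ℕ => (a : ZMod n)) := by
  induction l with
  | nil => rfl
  | cons a l ih => simpa using ih

/-- The list `[n-1, n-2, ..., i]` over `ZMod n`. -/
def dlist (n i : ℕ) : List (ZMod n) :=
  ((List.range' i (n - i)).map (fun a : ℕ => (a : ZMod n))).reverse

/-- The list `[j-1, ..., i]` over `ZMod n`. -/
def mlist (n i j : ℕ) : List (ZMod n) :=
  ((List.range' i (j - i)).map (fun a : ℕ => (a : ZMod n))).reverse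

lemma desc_eq_dlist (n k : ℕ) (hn : 1 ≤ n) :
    desc n (n - 1) k = FreeMonoid.ofList (dlist n k) := by
  rw [desc, coeList, dlist, show n - 1 + 1 - k = n - k by omega]

lemma dlist_split (n : ℕ) {i j : ℕ} (hij : i ≤ j) (hjn : j ≤ n) :
    dlist n i = dlist n j ++ mlist n i j := by
  have h1 : List.range' i (n - i) = List.range' i (j - i) ++ List.range' j (n - j) := by
    have h := List.range'_append_1 (s := i) (m := j - i) (n := n - j)
    rw [show i + (j - i) = j by omega, show j - i + (n - j) = n - i by omega] at h
    exact h.symm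
  rw [dlist, h1, List.map_append, List.reverse_append]
  rfl

lemma dlist_cons (n : ℕ) {i : ℕ} (h : i < n) :
    dlist n i = dlist n (i + 1) ++ [(i : ZMod n)] := by
  rw [dlist_split n (Nat.le_succ i) h]
  rw [mlist, show i + 1 - i = 1 by omega]
  rfl

lemma natCast_ne_natCast (n : ℕ) [NeZero n] {a b : ℕ} (ha : a < n) (hb : b < n)
    (hab : a ≠ b) : (a : ZMod n) ≠ (b : ZMod n) := by
  intro h
  apply hab
  rw [← ZMod.val_cast_of_lt ha, ← ZMod.val_cast_of_lt hb, h]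

lemma count_mlist_eq_zero (n : ℕ) {i j : ℕ} {c : ZMod n}
    (h : ∀ t : ℕ, i ≤ t → t < i + (j - i) → (t : ZMod n) ≠ c) :
    (mlist n i j).count c = 0 := by
  rw [List.count_eq_zero]
  intro hx
  rw [mlist, List.mem_reverse, List.mem_map] at hx
  obtain ⟨t, ht, hteq⟩ := hx
  rw [List.mem_range'_1] at ht
  exact h t ht.1 ht.2 hteq

lemma mlist_length (n i j : ℕ) : (mlist n i j).length = j - i := by
  simp [mlist]

lemma descend (n : ℕ) (hn : 3 ≤ n) :
    ∀ (l : List (ZMod n)) (i : ℕ), 1 ≤ i → i ≤ n - 1 →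
    Reduced n (FreeMonoid.ofList (dlist n i ++ l)) →
    (∀ x ∈ l, x ≠ 0) →
    ∃ k, 1 ≤ k ∧ k ≤ n - 1 ∧ dlist n i ++ l = dlist n k := by
  haveI : NeZero n := ⟨by omega⟩
  intro l
  induction l with
  | nil =>
    intro i h1 h2 _ _
    exact ⟨i, h1, h2, by simp⟩
  | cons c rest ih =>
    intro i h1 h2 hred hz
    set j := c.val with hjdef
    have hjn : j < n := ZMod.val_lt c
    have hc : ((j : ℕ) : ZMod n) = c := ZMod.natCast_rightInverse c
    have hin : i < n := by omega
    -- case j = 0 : impossible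
    have hj0 : j ≠ 0 := by
      intro h0
      apply hz c (List.mem_cons_self (a := c) (l := rest))
      rw [← hc, h0, Nat.cast_zero]
    -- case j = i : rule (1)
    have hji : j ≠ i := by
      intro hji
      apply hred.1 i h1 (by omega)
      refine ⟨FreeMonoid.ofList (dlist n (i + 1)), FreeMonoid.ofList rest, ?_⟩
      apply FreeMonoid.toList.injective
      simp only [FreeMonoid.toList_mul, FreeMonoid.toList_ofList, fx, FreeMonoid.toList_of]
      rw [dlist_cons n hin, ← hc, hji]
      simp
    -- case 1 ≤ j ≤ i - 2 : rule (2)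
    have hjlt : ¬ j < i - 1 := by
      intro hjlt
      apply hred.2.1 j i (by omega) (by omega) (by omega) (by omega)
      refine ⟨FreeMonoid.ofList (dlist n (i + 1)), FreeMonoid.ofList rest, ?_⟩
      apply FreeMonoid.toList.injective
      simp only [FreeMonoid.toList_mul, FreeMonoid.toList_ofList, fx, FreeMonoid.toList_of]
      rw [dlist_cons n hin, ← hc]
      simp
    -- case j > i : rule (5)
    have hjgt : ¬ i < j := by
      intro hjgt
      have hmne : FreeMonoid.ofList (mlist n i j) ≠ 1 := by
        intro hh
        have h0 : mlist n i j = ([] : List (ZMod n)) := congrArg FreeMonoid.toList hh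
        have := mlist_length n i j
        rw [h0] at this
        simp at this
        omega
      have hcnt1 : cnt n (FreeMonoid.ofList (mlist n i j)) ((j : ℕ) : ZMod n) = 0 := by
        rw [cnt, FreeMonoid.toList_ofList]
        apply count_mlist_eq_zero
        intro t ht1 ht2
        exact natCast_ne_natCast n (by omega) hjn (by omega)
      have hcnt2 : cnt n (FreeMonoid.ofList (mlist n i j)) (((j : ℕ) : ZMod n) + 1) = 0 := by
        rw [cnt, FreeMonoid.toList_ofList]
        apply count_mlist_eq_zero
        intro t ht1 ht2
        have hcast : ((j : ℕ) : ZMod n) + 1 = (((j + 1) % n : ℕ) : ZMod n) := by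
          rw [ZMod.natCast_mod]
          push_cast
          ring
        rw [hcast]
        have hmod : (j + 1) % n = 0 ∨ (j + 1) % n = j + 1 := by
          rcases Nat.lt_or_ge (j + 1) n with h' | h'
          · right; exact Nat.mod_eq_of_lt h'
          · left; have : j + 1 = n := by omega
            rw [this, Nat.mod_self]
        apply natCast_ne_natCast n (by omega) (Nat.mod_lt _ (by omega))
        rcases hmod with h'' | h'' <;> omega
      apply hred.2.2.2.2 j (FreeMonoid.ofList (mlist n i j)) (by omega) (by omega)
        hmne hcnt1 hcnt2
      refine ⟨FreeMonoid.ofList (dlist n (j + 1)), FreeMonoid.ofList rest, ?_⟩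
      apply FreeMonoid.toList.injective
      simp only [FreeMonoid.toList_mul, FreeMonoid.toList_ofList, fx, FreeMonoid.toList_of]
      rw [dlist_split n (le_of_lt hjgt) (by omega), dlist_cons n hjn, ← hc]
      simp
    -- remaining case : j = i - 1 with i ≥ 2
    have hji1 : j = i - 1 := by omega
    have hi2 : 2 ≤ i := by omega
    have hstep : dlist n i ++ c :: rest = dlist n (i - 1) ++ rest := by
      have h' : dlist n (i - 1) = dlist n i ++ [((i - 1 : ℕ) : ZMod n)] := by
        have := dlist_cons n (show i - 1 < n by omega)
        rwa [show i - 1 + 1 = i by omega] at this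
      rw [h', ← hc, hji1]
      simp
    rw [hstep] at hred ⊢
    exact ih (i - 1) (by omega) (by omega) hred
      (fun x hx => hz x (List.mem_cons_of_mem c hx))

end Lem1

/-- Lemma 2.2 (lem1). -/
theorem stmt2 (n : ℕ) (hn : 3 ≤ n) (u : FreeMonoid (ZMod n))
    (hred : Reduced n (fx n (n - 1) * u)) (hu : cnt n u (n : ZMod n) = 0) :
    ∃ k : ℕ, 1 ≤ k ∧ k ≤ n - 1 ∧ fx n (n - 1) * u = desc n (n - 1) k := by
  haveI : NeZero n := ⟨by omega⟩
  have hd1 : dlist n (n - 1) = [((n - 1 : ℕ) : ZMod n)] := by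
    rw [dlist, show n - (n - 1) = 1 by omega]
    rfl
  have hw : fx n (n - 1) * u = FreeMonoid.ofList (dlist n (n - 1) ++ FreeMonoid.toList u) := by
    apply FreeMonoid.toList.injective
    simp [fx, hd1]
  have hz : ∀ x ∈ FreeMonoid.toList u, x ≠ 0 := by
    intro x hx h0
    rw [cnt, ZMod.natCast_self, List.count_eq_zero] at hu
    rw [h0] at hx
    exact hu hx
  obtain ⟨k, hk1, hk2, hk3⟩ := descend n hn (FreeMonoid.toList u) (n - 1)
    (by omega) le_rfl (by rwa [← hw]) hz
  exact ⟨k, hk1, hk2, by rw [hw, hk3, desc_eq_dlist n k (by omega)]⟩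

end HK
end

section
/- Let n ≥ 3. If w = x_n u x_n is a reduced word in F with |u|_n = 0, then either u = x_{n−1} x_{n−2} ⋯ x_1, or u = x_1 x_2 ⋯ x_i x_{n−1} x_{n−2} ⋯ x_j for some 1 ≤ i < j ≤ n−1. -/
namespace HK

section Aux

/-- cast a list of naturals to `ZMod n`. -/
private def cl (n : ℕ) (B : List ℕ) : List (ZMod n) :=
  B.map (Nat.cast : ℕ → ZMod n)

private lemma cl_append (n : ℕ) (B C : List ℕ) : cl n (B ++ C) = cl n B ++ cl n C := by
  simp [cl]

private lemma cl_reverse (n : ℕ) (B : List ℕ) : cl n B.reverse = (cl n B).reverse :=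
  List.map_reverse

private lemma cl_nil (n : ℕ) : cl n ([] : List ℕ) = [] := rfl

private lemma cl_cons (n : ℕ) (x : ℕ) (B : List ℕ) :
    cl n (x :: B) = (x : ZMod n) :: cl n B := rfl

private lemma do_cast_eq (n : ℕ) (l : List ℕ) :
    (do let a ← l; pure ((a : ZMod n)) : List (ZMod n)) = List.map Nat.cast l := by
  induction l with
  | nil => rfl
  | cons x xs ih => simp only [List.map_cons, ← ih]; rfl

private lemma isFactor_of_lists {α : Type*} (w v : FreeMonoid α) (P S : List α)
    (h : FreeMonoid.toList v = P ++ FreeMonoid.toList w ++ S) : IsFactor w v := by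
  refine ⟨FreeMonoid.ofList P, FreeMonoid.ofList S, ?_⟩
  apply FreeMonoid.toList.injective
  simp only [FreeMonoid.toList_mul, FreeMonoid.toList_ofList]
  exact h

private lemma ofList_ne_one {α : Type*} {B : List α} (h : B ≠ []) :
    FreeMonoid.ofList B ≠ 1 := by
  intro hc
  apply h
  have := congrArg FreeMonoid.toList hc
  simpa using this

end Aux

section Norm

private lemma asc_eq (n a b : ℕ) :
    asc n a b = FreeMonoid.ofList (cl n (List.range' a (b + 1 - a))) := by
  rw [asc, do_cast_eq]
  simp [cl]

private lemma desc_eq (n a b : ℕ) :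
    desc n a b = FreeMonoid.ofList ((cl n (List.range' b (a + 1 - b))).reverse) := by
  rw [desc, do_cast_eq]
  simp [cl]

end Norm

/-- Lemma 2.4 (lem3). -/
theorem stmt3 (n : ℕ) (hn : 3 ≤ n) (u : FreeMonoid (ZMod n))
    (hred : Reduced n (fx n n * u * fx n n)) (hu : cnt n u (n : ZMod n) = 0) :
    u = desc n (n - 1) 1 ∨
      ∃ i j : ℕ, 1 ≤ i ∧ i < j ∧ j ≤ n - 1 ∧ u = asc n 1 i * desc n (n - 1) j := by
  classical
  haveI : NeZero n := ⟨by omega⟩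
  obtain ⟨R1, R2, R3, R4, R5⟩ := hred
  set L := FreeMonoid.toList u with hL
  -- basic cast facts
  have castval : ∀ c : ZMod n, ((ZMod.val c : ℕ) : ZMod n) = c := fun c =>
    ZMod.natCast_rightInverse c
  have valcast : ∀ m : ℕ, m < n → ZMod.val ((m : ℕ) : ZMod n) = m := fun m h =>
    ZMod.val_cast_of_lt h
  have fxval : ∀ c : ZMod n, fx n (ZMod.val c) = FreeMonoid.of c := by
    intro c; unfold fx; rw [castval]
  have hu0 : (0 : ZMod n) ∉ L := by
    have h0 : List.count (0 : ZMod n) L = 0 := by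
      simpa [cnt, ZMod.natCast_self, hL] using hu
    exact List.count_eq_zero.mp h0
  have hvalmem : ∀ c ∈ L, 1 ≤ ZMod.val c ∧ ZMod.val c ≤ n - 1 := by
    intro c hc
    have h1 : c ≠ 0 := fun h => hu0 (h ▸ hc)
    have h2 : ZMod.val c < n := ZMod.val_lt c
    have h3 : ZMod.val c ≠ 0 := by
      intro h
      apply h1
      have h4 := castval c
      rw [h] at h4
      simpa using h4.symm
    omega
  have mkFactor : ∀ (mid : FreeMonoid (ZMod n)) (P S : List (ZMod n)),
      (0 : ZMod n) :: (L ++ [(0 : ZMod n)]) = P ++ FreeMonoid.toList mid ++ S →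
      IsFactor mid (fx n n * u * fx n n) := by
    intro mid P S h
    refine isFactor_of_lists _ _ P S ?_
    rw [← h]
    simp [fx, FreeMonoid.toList_mul, FreeMonoid.toList_of, ZMod.natCast_self, hL]
  have memcl : ∀ (x : ℕ) (B : List ℕ), x < n → (∀ y ∈ B, y < n) →
      (((x : ℕ) : ZMod n) ∈ cl n B ↔ x ∈ B) := by
    intro x B hx hB
    constructor
    · intro h
      obtain ⟨y, hy, hxy⟩ := List.mem_map.mp h
      have h2 := congrArg ZMod.val hxy
      rw [valcast y (hB y hy), valcast x hx] at h2
      exact h2 ▸ hy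
    · intro h
      exact List.mem_map.mpr ⟨x, h, rfl⟩
  have zerocl : ∀ (B : List ℕ), (∀ y ∈ B, 1 ≤ y ∧ y < n) → (0 : ZMod n) ∉ cl n B := by
    intro B hB h
    obtain ⟨y, hy, hxy⟩ := List.mem_map.mp h
    have h2 := congrArg ZMod.val hxy
    rw [valcast y (hB y hy).2, ZMod.val_zero] at h2
    have := (hB y hy).1
    omega
  -- the five forbidden-factor extraction lemmas
  have E5 : ∀ (a : ℕ) (P B S : List (ZMod n)), 1 ≤ a → a ≤ n - 1 →
      L = P ++ ((a : ℕ) : ZMod n) :: (B ++ ((a : ℕ) : ZMod n) :: S) →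
      B ≠ [] → (((a : ℕ) : ZMod n) ∉ B) → ((((a : ℕ) : ZMod n) + 1) ∉ B) → False := by
    intro a P B S ha1 ha2 hdec hBne h1 h2
    refine R5 a (FreeMonoid.ofList B) ha1 (by omega) (ofList_ne_one hBne) ?_ ?_ ?_
    · simpa [cnt, FreeMonoid.toList_ofList] using List.count_eq_zero.mpr h1
    · simpa [cnt, FreeMonoid.toList_ofList] using List.count_eq_zero.mpr h2
    · refine mkFactor _ ((0 : ZMod n) :: P) (S ++ [(0 : ZMod n)]) ?_
      simp [fx, FreeMonoid.toList_mul, FreeMonoid.toList_of, FreeMonoid.toList_ofList,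
        hdec, List.append_assoc]
  have E4 : ∀ (a : ℕ) (P B S : List (ZMod n)), 1 ≤ a → a ≤ n - 1 →
      L = P ++ ((a : ℕ) : ZMod n) :: (B ++ ((a : ℕ) : ZMod n) :: S) →
      B ≠ [] → (((a : ℕ) : ZMod n) ∉ B) → ((((a : ℕ) : ZMod n) - 1) ∉ B) → False := by
    intro a P B S ha1 ha2 hdec hBne h1 h2
    refine R4 a (FreeMonoid.ofList B) ha1 (by omega) (ofList_ne_one hBne) ?_ ?_ ?_
    · simpa [cnt, FreeMonoid.toList_ofList] using List.count_eq_zero.mpr h1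
    · simpa [cnt, FreeMonoid.toList_ofList] using List.count_eq_zero.mpr h2
    · refine mkFactor _ ((0 : ZMod n) :: P) (S ++ [(0 : ZMod n)]) ?_
      simp [fx, FreeMonoid.toList_mul, FreeMonoid.toList_of, FreeMonoid.toList_ofList,
        hdec, List.append_assoc]
  have E1 : ∀ (P S : List (ZMod n)) (a b : ZMod n), L = P ++ a :: b :: S →
      (ZMod.val b = ZMod.val a - 1 ∧ 2 ≤ ZMod.val a) ∨ ZMod.val a < ZMod.val b := by
    intro P S a b hdec
    have ha := hvalmem a (by rw [hdec]; simp)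
    have hb := hvalmem b (by rw [hdec]; simp)
    have hne : ZMod.val a ≠ ZMod.val b := by
      intro h
      have hab : a = b := by rw [← castval a, ← castval b, h]
      refine R1 (ZMod.val a) ha.1 (by omega) ?_
      refine mkFactor _ ((0 : ZMod n) :: P) (S ++ [(0 : ZMod n)]) ?_
      rw [fxval]
      simp [FreeMonoid.toList_mul, FreeMonoid.toList_of, hdec, hab, List.append_assoc]
    have hnot : ¬ (ZMod.val b + 2 ≤ ZMod.val a) := by
      intro h
      refine R2 (ZMod.val b) (ZMod.val a) hb.1 (by omega) (by omega) (by omega) ?_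
      refine mkFactor _ ((0 : ZMod n) :: P) (S ++ [(0 : ZMod n)]) ?_
      rw [fxval, fxval]
      simp [FreeMonoid.toList_mul, FreeMonoid.toList_of, hdec, List.append_assoc]
    omega
  have Efirst : ∀ (b : ZMod n) (S : List (ZMod n)), L = b :: S →
      ZMod.val b = 1 ∨ ZMod.val b = n - 1 := by
    intro b S hdec
    have hb := hvalmem b (by rw [hdec]; simp)
    by_contra hcon
    push_neg at hcon
    refine R2 (ZMod.val b) n hb.1 le_rfl (by omega) (by omega) ?_
    refine mkFactor _ [] (S ++ [(0 : ZMod n)]) ?_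
    rw [fxval]
    simp [fx, ZMod.natCast_self, FreeMonoid.toList_mul, FreeMonoid.toList_of, hdec]
  have E3 : ∀ (S : List (ZMod n)) (c : ZMod n) (i : ℕ), 1 ≤ i →
      L = cl n (List.range' 1 i) ++ c :: S → i + 1 < ZMod.val c → ZMod.val c = n - 1 := by
    intro S c i hi hdec hlt
    have hc := hvalmem c (by rw [hdec]; simp)
    by_contra hcon
    refine R3 i (ZMod.val c) hi hlt (by omega) ?_
    refine mkFactor _ [] (S ++ [(0 : ZMod n)]) ?_
    have hasc : asc n 1 i = FreeMonoid.ofList (cl n (List.range' 1 i)) := by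
      rw [asc_eq]
      congr 2 <;> omega
    rw [fxval, hasc]
    simp [fx, ZMod.natCast_self, FreeMonoid.toList_mul, FreeMonoid.toList_of,
      FreeMonoid.toList_ofList, hdec, List.append_assoc]
  -- boundary facts
  have hLne : L ≠ [] := by
    intro h
    refine R1 n (by omega) le_rfl ?_
    refine mkFactor _ [] [] ?_
    simp [fx, ZMod.natCast_self, FreeMonoid.toList_mul, FreeMonoid.toList_of, h]
  have hone : (1 : ZMod n) ∈ L := by
    by_contra h
    refine R5 n u (by omega) le_rfl ?_ hu ?_ ⟨1, 1, by simp⟩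
    · intro h1; exact hLne (by rw [hL, h1]; rfl)
    · have h2 : ((n : ℕ) : ZMod n) + 1 = 1 := by simp [ZMod.natCast_self]
      rw [cnt, h2, ← hL]
      exact List.count_eq_zero.mpr h
  have hnm1 : ((n - 1 : ℕ) : ZMod n) ∈ L := by
    by_contra h
    refine R4 n u (by omega) le_rfl ?_ hu ?_ ⟨1, 1, by simp⟩
    · intro h1; exact hLne (by rw [hL, h1]; rfl)
    · have h2 : ((n : ℕ) : ZMod n) - 1 = ((n - 1 : ℕ) : ZMod n) := by
        rw [Nat.cast_sub (by omega : 1 ≤ n)]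
        simp
      rw [cnt, h2, ← hL]
      exact List.count_eq_zero.mpr h
  -- splitting lemmas for ranges
  have descsplit : ∀ k c : ℕ, 1 ≤ k → k ≤ c → c ≤ n - 1 →
      (List.range' k (n - k)).reverse =
        (List.range' (c + 1) (n - (c + 1))).reverse ++ c :: (List.range' k (c - k)).reverse := by
    intro k c h1 h2 h3
    have e1 : List.range' k (n - k) = List.range' k (c - k) ++ List.range' c (n - c) := by
      have h := List.range'_append_1 (s := k) (m := c - k) (n := n - c)
      rw [show k + (c - k) = c by omega] at h
      rw [show c - k + (n - c) = n - k by omega] at h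
      exact h.symm
    have e2 : List.range' c (n - c) = c :: List.range' (c + 1) (n - (c + 1)) := by
      rw [show n - c = (n - (c + 1)) + 1 by omega, List.range'_succ]
    rw [e1, e2]
    simp
  have ascsplit : ∀ i m : ℕ, m ≤ i →
      List.range' 1 i = List.range' 1 m ++ List.range' (m + 1) (i - m) := by
    intro i m h
    have hh := List.range'_append_1 (s := 1) (m := m) (n := i - m)
    rw [show 1 + m = m + 1 by omega] at hh
    rw [show m + (i - m) = i by omega] at hh
    exact hh.symm
  -- the descending run
  have desc_run : ∀ (rest : List (ZMod n)) (k i : ℕ),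
      1 ≤ k → k ≤ n - 1 → i < k →
      L = cl n (List.range' 1 i) ++ cl n (List.range' k (n - k)).reverse ++ rest →
      ∃ j, 1 ≤ j ∧ i < j ∧ j ≤ n - 1 ∧ (i = 0 → j = 1) ∧
        L = cl n (List.range' 1 i) ++ cl n (List.range' j (n - j)).reverse := by
    intro rest
    induction rest with
    | nil =>
      intro k i hk1 hk2 hik hLe
      refine ⟨k, hk1, hik, hk2, ?_, by simpa using hLe⟩
      intro hi0
      by_contra hk
      have hmem : ((1 : ℕ) : ZMod n) ∈ L := by simpa using hone
      rw [hLe, hi0] at hmem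
      simp only [List.range'_zero, cl_nil, List.nil_append, List.append_nil] at hmem
      have hB : ∀ y ∈ (List.range' k (n - k)).reverse, y < n := by
        intro y hy
        rw [List.mem_reverse, List.mem_range'_1] at hy
        omega
      have h2 : (1 : ℕ) ∈ (List.range' k (n - k)).reverse :=
        (memcl 1 _ (by omega) hB).mp hmem
      rw [List.mem_reverse, List.mem_range'_1] at h2
      omega
    | cons c rest ih =>
      intro k i hk1 hk2 hik hLe
      have hkn : k < n := by omega
      have hsplit := descsplit k k hk1 le_rfl hk2
      rw [Nat.sub_self, List.range'_zero, List.reverse_nil] at hsplit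
      have hdec1 : L = (cl n (List.range' 1 i) ++ cl n (List.range' (k + 1) (n - (k + 1))).reverse)
          ++ ((k : ℕ) : ZMod n) :: c :: rest := by
        rw [hLe, hsplit]
        simp [cl_append, cl_cons, cl_nil, List.append_assoc]
      have hadj := E1 _ _ _ _ hdec1
      rw [valcast k hkn] at hadj
      have hc : c ∈ L := by rw [hdec1]; simp
      have hcv := hvalmem c hc
      have hcc : ((ZMod.val c : ℕ) : ZMod n) = c := castval c
      rcases hadj with ⟨hdown, hk2'⟩ | hup
      · by_cases hcase : k - 1 = i
        · -- descent hits the top of the ascending prefix: contradiction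
          exfalso
          have hi1 : 1 ≤ i := by omega
          have hidec : List.range' 1 i = List.range' 1 (i - 1) ++ [i] := by
            have hh := ascsplit i (i - 1) (by omega)
            rw [show i - 1 + 1 = i by omega, show i - (i - 1) = 1 by omega] at hh
            simpa using hh
          have hcI : c = ((i : ℕ) : ZMod n) := by
            rw [← hcc, hdown, hcase]
          have hB : ∀ y ∈ (List.range' k (n - k)).reverse, k ≤ y ∧ y < n := by
            intro y hy
            rw [List.mem_reverse, List.mem_range'_1] at hy
            omega
          refine E4 i (cl n (List.range' 1 (i - 1))) (cl n (List.range' k (n - k)).reverse)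
            rest hi1 (by omega) ?_ ?_ ?_ ?_
          · rw [hLe, hidec, hcI]
            simp [cl_append, cl_cons, cl_nil, List.append_assoc]
          · have : (List.range' k (n - k)).reverse ≠ [] := by
              simp only [ne_eq, List.reverse_eq_nil_iff, List.range'_eq_nil_iff]
              omega
            simpa [cl, List.map_eq_nil_iff] using this
          · intro hmem
            have h2 := (memcl i _ (by omega) (fun y hy => (hB y hy).2)).mp hmem
            rw [List.mem_reverse, List.mem_range'_1] at h2
            omega
          · by_cases hi2 : i = 1
            · subst hi2
              have h0 : ((1 : ℕ) : ZMod n) - 1 = 0 := by simp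
              rw [h0]
              exact zerocl _ (fun y hy => ⟨by have := hB y hy; omega, (hB y hy).2⟩)
            · have h0 : ((i : ℕ) : ZMod n) - 1 = ((i - 1 : ℕ) : ZMod n) := by
                rw [Nat.cast_sub (by omega : 1 ≤ i)]
                simp
              rw [h0]
              intro hmem
              have h2 := (memcl (i - 1) _ (by omega) (fun y hy => (hB y hy).2)).mp hmem
              rw [List.mem_reverse, List.mem_range'_1] at h2
              omega
        · -- continue the descent
          have hsplit2 := descsplit (k - 1) (k - 1) (by omega) le_rfl (by omega)
          rw [Nat.sub_self, List.range'_zero, List.reverse_nil,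
            show k - 1 + 1 = k by omega] at hsplit2
          refine ih (k - 1) i (by omega) (by omega) (by omega) ?_
          rw [hLe, hsplit2]
          have hcK : c = ((k - 1 : ℕ) : ZMod n) := by rw [← hcc, hdown]
          rw [hcK]
          simp [cl_append, cl_cons, cl_nil, List.append_assoc]
      · -- a jump upward inside the descent: contradiction
        exfalso
        have hsplit3 := descsplit k (ZMod.val c) hk1 (le_of_lt hup) (by omega)
        have hB : ∀ y ∈ (List.range' k (ZMod.val c - k)).reverse, k ≤ y ∧ y < ZMod.val c := by
          intro y hy
          rw [List.mem_reverse, List.mem_range'_1] at hy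
          omega
        refine E5 (ZMod.val c)
          (cl n (List.range' 1 i) ++ cl n (List.range' (ZMod.val c + 1) (n - (ZMod.val c + 1))).reverse)
          (cl n (List.range' k (ZMod.val c - k)).reverse) rest (by omega) (by omega) ?_ ?_ ?_ ?_
        · rw [hLe, hsplit3, ← hcc]
          simp [cl_append, cl_cons, cl_nil, List.append_assoc]
        · have : (List.range' k (ZMod.val c - k)).reverse ≠ [] := by
            simp only [ne_eq, List.reverse_eq_nil_iff, List.range'_eq_nil_iff]
            omega
          simpa [cl, List.map_eq_nil_iff] using this
        · intro hmem
          have h2 := (memcl (ZMod.val c) _ (by omega)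
            (fun y hy => by have := hB y hy; omega)).mp hmem
          have := hB _ h2
          omega
        · by_cases htop : ZMod.val c = n - 1
          · have h0 : ((ZMod.val c : ℕ) : ZMod n) + 1 = ((ZMod.val c + 1 : ℕ) : ZMod n) := by
              push_cast
              ring
            rw [h0, show ZMod.val c + 1 = n by omega, ZMod.natCast_self]
            exact zerocl _ (fun y hy => ⟨by have := hB y hy; omega,
              by have := hB y hy; omega⟩)
          · have h0 : ((ZMod.val c : ℕ) : ZMod n) + 1 = ((ZMod.val c + 1 : ℕ) : ZMod n) := by
              push_cast
              ring
            rw [h0]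
            intro hmem
            have h2 := (memcl (ZMod.val c + 1) _ (by omega)
              (fun y hy => by have := hB y hy; omega)).mp hmem
            have := hB _ h2
            omega
  -- the ascending run
  have asc_run : ∀ (rest : List (ZMod n)) (k : ℕ), 1 ≤ k → k ≤ n - 2 →
      L = cl n (List.range' 1 k) ++ rest →
      ∃ i j, 1 ≤ i ∧ i < j ∧ j ≤ n - 1 ∧
        L = cl n (List.range' 1 i) ++ cl n (List.range' j (n - j)).reverse := by
    intro rest
    induction rest with
    | nil =>
      intro k hk1 hk2 hLe
      exfalso
      have hmem : ((n - 1 : ℕ) : ZMod n) ∈ L := hnm1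
      rw [hLe] at hmem
      simp only [List.append_nil] at hmem
      have hB : ∀ y ∈ List.range' 1 k, y < n := by
        intro y hy
        rw [List.mem_range'_1] at hy
        omega
      have h2 := (memcl (n - 1) _ (by omega) hB).mp hmem
      rw [List.mem_range'_1] at h2
      omega
    | cons c rest ih =>
      intro k hk1 hk2 hLe
      have hkn : k < n := by omega
      have hidec : List.range' 1 k = List.range' 1 (k - 1) ++ [k] := by
        have hh := ascsplit k (k - 1) (by omega)
        rw [show k - 1 + 1 = k by omega, show k - (k - 1) = 1 by omega] at hh
        simpa using hh
      have hdec1 : L = cl n (List.range' 1 (k - 1)) ++ ((k : ℕ) : ZMod n) :: c :: rest := by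
        rw [hLe, hidec]
        simp [cl_append, cl_cons, cl_nil, List.append_assoc]
      have hadj := E1 _ _ _ _ hdec1
      rw [valcast k hkn] at hadj
      have hc : c ∈ L := by rw [hdec1]; simp
      have hcv := hvalmem c hc
      have hcc : ((ZMod.val c : ℕ) : ZMod n) = c := castval c
      rcases hadj with ⟨hdown, hk2'⟩ | hup
      · -- step down inside the ascent: contradiction
        exfalso
        have hidec2 : List.range' 1 k = List.range' 1 (k - 2) ++ [k - 1, k] := by
          have hh := ascsplit k (k - 2) (by omega)
          rw [show k - 2 + 1 = k - 1 by omega, show k - (k - 2) = 2 by omega] at hh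
          rw [hh]
          congr 1
          rw [show (2 : ℕ) = 1 + 1 from rfl, List.range'_succ,
            show k - 1 + 1 = k by omega]
          rfl
        have hcK : c = ((k - 1 : ℕ) : ZMod n) := by rw [← hcc, hdown]
        refine E4 (k - 1) (cl n (List.range' 1 (k - 2))) [((k : ℕ) : ZMod n)] rest
          (by omega) (by omega) ?_ (by simp) ?_ ?_
        · rw [hLe, hidec2, hcK]
          simp [cl_append, cl_cons, cl_nil, List.append_assoc]
        · intro hmem
          simp only [List.mem_singleton] at hmem
          have h2 := congrArg ZMod.val hmem
          rw [valcast (k - 1) (by omega), valcast k hkn] at h2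
          omega
        · by_cases hk3 : k = 2
          · subst hk3
            have h0 : ((2 - 1 : ℕ) : ZMod n) - 1 = 0 := by norm_num
            rw [h0]
            intro hmem
            simp only [List.mem_singleton] at hmem
            have h2 := congrArg ZMod.val hmem.symm
            rw [valcast 2 (by omega), ZMod.val_zero] at h2
            omega
          · have h0 : ((k - 1 : ℕ) : ZMod n) - 1 = ((k - 2 : ℕ) : ZMod n) := by
              rw [show k - 2 = (k - 1) - 1 by omega, Nat.cast_sub (by omega : 1 ≤ k - 1)]
              simp
            rw [h0]
            intro hmem
            simp only [List.mem_singleton] at hmem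
            have h2 := congrArg ZMod.val hmem
            rw [valcast (k - 2) (by omega), valcast k hkn] at h2
            omega
      · -- jump upward
        by_cases hctop : ZMod.val c = n - 1
        · -- jump to n-1 : start the descent
          have hd := desc_run rest (n - 1) k (by omega) le_rfl (by omega) ?_
          · obtain ⟨j, hj1, hj2, hj3, _, hjeq⟩ := hd
            exact ⟨k, j, hk1, hj2, hj3, hjeq⟩
          · have h1 : n - (n - 1) = 1 := by omega
            rw [h1, hLe]
            have hcK : c = ((n - 1 : ℕ) : ZMod n) := by rw [← hcc, hctop]
            rw [hcK]
            simp [cl_cons, cl_nil]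
        · by_cases hnext : ZMod.val c = k + 1
          · -- continue the ascent
            refine ih (k + 1) (by omega) (by omega) ?_
            have hidec3 : List.range' 1 (k + 1) = List.range' 1 k ++ [k + 1] := by
              have hh := ascsplit (k + 1) k (by omega)
              rw [show k + 1 - k = 1 by omega] at hh
              simpa using hh
            rw [hLe, hidec3]
            have hcK : c = ((k + 1 : ℕ) : ZMod n) := by rw [← hcc, hnext]
            rw [hcK]
            simp [cl_append, cl_cons, cl_nil, List.append_assoc]
          · -- a long jump not to n-1 : contradiction with (3)
            exfalso
            have h3 := E3 rest c k hk1 hLe (by omega)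
            exact hctop h3
  -- put everything together
  obtain ⟨b, T, hbT⟩ : ∃ b T, L = b :: T := by
    cases hLdef : L with
    | nil => exact absurd hLdef hLne
    | cons b T => exact ⟨b, T, rfl⟩
  have hbb := castval b
  rcases Efirst b T hbT with h1 | h2
  · -- starts with x₁ : ascent
    have hstart : L = cl n (List.range' 1 1) ++ T := by
      rw [hbT]
      have : b = ((1 : ℕ) : ZMod n) := by rw [← hbb, h1]
      rw [this]
      simp [cl_cons, cl_nil]
    obtain ⟨i, j, hi, hij, hjn, heq⟩ := asc_run T 1 le_rfl (by omega) hstart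
    right
    refine ⟨i, j, hi, hij, hjn, ?_⟩
    apply FreeMonoid.toList.injective
    rw [← hL, heq, asc_eq, desc_eq]
    simp only [FreeMonoid.toList_mul, FreeMonoid.toList_ofList]
    rw [← cl_reverse]
    rw [show i + 1 - 1 = i by omega, show n - 1 + 1 - j = n - j by omega]
  · -- starts with x_{n-1} : descent
    have hstart : L = cl n (List.range' 1 0) ++ cl n (List.range' (n - 1) (n - (n - 1))).reverse ++ T := by
      rw [hbT, show n - (n - 1) = 1 by omega]
      have : b = ((n - 1 : ℕ) : ZMod n) := by rw [← hbb, h2]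
      rw [this]
      simp [cl_cons, cl_nil]
    obtain ⟨j, hj1, hj2, hj3, hj0, heq⟩ := desc_run T (n - 1) 0 (by omega) le_rfl (by omega) hstart
    left
    have hj1' : j = 1 := hj0 rfl
    subst hj1'
    apply FreeMonoid.toList.injective
    rw [← hL, heq, desc_eq]
    simp only [FreeMonoid.toList_ofList]
    rw [← cl_reverse]
    rw [show n - 1 + 1 - 1 = n - 1 by omega]
    simp [cl_nil]

end HK
end

section
/- Let n ≥ 3. If a reduced word w ∈ F contains a factor x_n x_1 x_2 ⋯ x_{n−1}, then w is a factor of (x_n x_1 x_2 ⋯ x_{n−1})^m for some m ≥ 1; similarly, if a reduced word w contains a factor x_n x_{n−1} ⋯ x_1, then w is a factor of (x_n x_{n−1} ⋯ x_1)^m for some m ≥ 1. -/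
namespace HK

section Aux
open List

def Step (n : ℕ) (a b : ZMod n) : Prop := b = a + 1
def Dstep (n : ℕ) (a b : ZMod n) : Prop := b = a - 1

def NF (n : ℕ) (w : List (ZMod n)) : Prop :=
  ∀ (a : ZMod n) (u : List (ZMod n)), (a :: (u ++ [a])) <:+: w →
    a ∈ u ∨ ((a - 1) ∈ u ∧ (a + 1) ∈ u)

lemma isFactor_iff_infix {α : Type*} (x w : FreeMonoid α) :
    IsFactor x w ↔ FreeMonoid.toList x <:+: FreeMonoid.toList w := by
  constructor
  · rintro ⟨v₁, v₂, rfl⟩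
    exact ⟨FreeMonoid.toList v₁, FreeMonoid.toList v₂, by simp [FreeMonoid.toList_mul]⟩
  · rintro ⟨s, t, h⟩
    refine ⟨FreeMonoid.ofList s, FreeMonoid.ofList t, FreeMonoid.toList.injective ?_⟩
    simp only [FreeMonoid.toList_mul, FreeMonoid.toList_ofList]
    exact h.symm

lemma exists_rep (hn : 0 < n) (a : ZMod n) :
    ∃ i : ℕ, 1 ≤ i ∧ i ≤ n ∧ (i : ZMod n) = a := by
  haveI : NeZero n := ⟨hn.ne'⟩
  rcases Nat.eq_zero_or_pos a.val with h | h
  · refine ⟨n, hn, le_refl n, ?_⟩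
    rw [ZMod.natCast_self]
    have := ZMod.natCast_rightInverse (n := n) a
    rw [h] at this; exact (by simpa using this : (0:ZMod n) = a)
  · exact ⟨a.val, h, (ZMod.val_lt a).le, ZMod.natCast_rightInverse a⟩

lemma NF.infix {n : ℕ} {w u : List (ZMod n)} (h : NF n w) (hu : u <:+: w) : NF n u :=
  fun a v hv => h a v (hv.trans hu)

lemma NF.rev {n : ℕ} {w : List (ZMod n)} (h : NF n w) : NF n w.reverse := by
  intro a u hinf
  have h2 : (a :: (u.reverse ++ [a])) <:+: w := by
    have := (List.reverse_infix (l₂ := w.reverse)).mpr hinf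
    rw [reverse_reverse] at this
    have heq : (a :: (u ++ [a])).reverse = a :: (u.reverse ++ [a]) := by simp
    rwa [heq] at this
  rcases h a u.reverse h2 with h3 | ⟨h3, h4⟩
  · exact Or.inl (by simpa using h3)
  · exact Or.inr ⟨by simpa using h3, by simpa using h4⟩

lemma chain_step_getElem {n : ℕ} {l : List (ZMod n)} (hc : Chain' (Step n) l)
    (h0 : 0 < l.length) : ∀ i, (hi : i < l.length) → l[i] = l[0] + (i : ℕ) := by
  intro i
  induction i with
  | zero => intro _; simp
  | succ k ih =>
    intro hi
    have hk : k + 1 < l.length := by omega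
    have hst := List.isChain_iff_getElem.1 hc k hk
    rw [Step] at hst
    rw [hst, ih (by omega)]
    push_cast; ring

lemma chain_dstep_getElem {n : ℕ} {l : List (ZMod n)} (hc : Chain' (Dstep n) l)
    (h0 : 0 < l.length) : ∀ i, (hi : i < l.length) → l[i] = l[0] - (i : ℕ) := by
  intro i
  induction i with
  | zero => intro _; simp
  | succ k ih =>
    intro hi
    have hk : k + 1 < l.length := by omega
    have hst := List.isChain_iff_getElem.1 hc k hk
    rw [Dstep] at hst
    rw [hst, ih (by omega)]
    push_cast; ring

lemma extR {n : ℕ} (hn : 3 ≤ n) {l : List (ZMod n)} (hc : Chain' (Step n) l)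
    (hL : n ≤ l.length) {b : ZMod n} (hnf : NF n (l ++ [b])) (hne : l ≠ []) :
    b = l.getLast hne + 1 := by
  haveI : NeZero n := ⟨by omega⟩
  have h0 : 0 < l.length := by omega
  have hget := chain_step_getElem hc h0
  set L := l.length with hLdef
  have hlast : l.getLast hne = l[L-1]'(by omega) := List.getLast_eq_getElem hne
  set e := l.getLast hne with he
  have heval : e = l[0] + ((L - 1 : ℕ) : ZMod n) := by rw [hlast]; exact hget _ (by omega)
  by_contra hb
  set d := (e - b).val with hd
  have hdlt : d < n := ZMod.val_lt _
  have hcast : ((d : ℕ) : ZMod n) = e - b := ZMod.natCast_rightInverse _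
  have hbe : b = e - ((d : ℕ) : ZMod n) := by rw [hcast]; ring
  have hdne : d ≠ n - 1 := by
    intro h
    apply hb
    have h1 : ((n - 1 : ℕ) : ZMod n) = -1 := by
      have : ((n - 1 : ℕ) : ZMod n) + 1 = ((n : ℕ) : ZMod n) := by
        rw [Nat.cast_sub (by omega : 1 ≤ n)]; push_cast; ring
      rw [ZMod.natCast_self] at this
      linear_combination this
    rw [hbe, h, h1]; ring
  rcases Nat.eq_zero_or_pos d with hd0 | hd1
  · -- b = e, square factor
    have hbe' : b = e := by rw [hbe, hd0]; simp
    have hinf : (b :: (([] : List (ZMod n)) ++ [b])) <:+: l ++ [b] := by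
      refine ⟨l.dropLast, [], ?_⟩
      have : l.dropLast ++ [e] = l := List.dropLast_append_getLast hne
      simp only [List.nil_append, List.append_nil, hbe']
      rw [← this]; simp
    have := hnf b [] hinf
    simp at this
  · have hdle : d ≤ n - 2 := by omega
    set u : List (ZMod n) := (List.range d).map (fun j => b + ((j + 1 : ℕ) : ZMod n)) with hu
    -- the suffix of l of length d+1 is b :: u
    have hval : ∀ j, j ≤ d → ∀ (hh : L - (d+1) + j < L), l[L - (d+1) + j] = b + (j : ℕ) := by
      intro j hj hh
      rw [hget _ hh, hbe, heval]
      have h1 : (L - (d+1) + j : ℕ) = (L - 1) - d + j := by omega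
      rw [h1, Nat.cast_add, Nat.cast_sub (by omega : d ≤ L - 1)]
      ring
    have hseg : l.drop (L - (d+1)) = b :: u := by
      apply List.ext_getElem
      · simp [hu]; omega
      · intro i h1 h2
        rw [List.getElem_drop]
        rcases Nat.eq_zero_or_pos i with rfl | hi
        · simpa using hval 0 (by omega) (by omega)
        · obtain ⟨k, rfl⟩ : ∃ k, i = k + 1 := ⟨i - 1, by omega⟩
          have hklt : k < d := by simp [hu] at h2; omega
          have := hval (k+1) (by omega) (by omega)
          rw [this]
          simp [hu, List.getElem_map, List.getElem_range]
    have hinf : (b :: (u ++ [b])) <:+: l ++ [b] := by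
      refine ⟨l.take (L - (d+1)), [], ?_⟩
      rw [List.append_nil]
      conv_rhs => rw [← List.take_append_drop (L - (d+1)) l, hseg]
      simp
    rcases hnf b u hinf with hmem | ⟨hmem, _⟩
    · rw [hu] at hmem
      simp only [List.mem_map, List.mem_range] at hmem
      obtain ⟨j, hjd, hj⟩ := hmem
      have : ((j + 1 : ℕ) : ZMod n) = 0 := by linear_combination hj
      rw [ZMod.natCast_eq_zero_iff] at this
      have := Nat.le_of_dvd (by omega) this
      omega
    · rw [hu] at hmem
      simp only [List.mem_map, List.mem_range] at hmem
      obtain ⟨j, hjd, hj⟩ := hmem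
      have : ((j + 2 : ℕ) : ZMod n) = 0 := by push_cast; push_cast at hj; linear_combination hj
      rw [ZMod.natCast_eq_zero_iff] at this
      have := Nat.le_of_dvd (by omega) this
      omega

lemma extL {n : ℕ} (hn : 3 ≤ n) {l : List (ZMod n)} (hc : Chain' (Step n) l)
    (hL : n ≤ l.length) {b : ZMod n} (hnf : NF n (b :: l)) (h0 : 0 < l.length) :
    l[0] = b + 1 := by
  haveI : NeZero n := ⟨by omega⟩
  have hget := chain_step_getElem hc h0
  by_contra hb
  set d := (b - l[0]).val with hd
  have hdlt : d < n := ZMod.val_lt _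
  have hcast : ((d : ℕ) : ZMod n) = b - l[0] := ZMod.natCast_rightInverse _
  have hbe : b = l[0] + ((d : ℕ) : ZMod n) := by rw [hcast]; ring
  have hdne : d ≠ n - 1 := by
    intro hdd
    apply hb
    have h1 : ((n - 1 : ℕ) : ZMod n) = -1 := by
      have : ((n - 1 : ℕ) : ZMod n) + 1 = ((n : ℕ) : ZMod n) := by
        rw [Nat.cast_sub (by omega : 1 ≤ n)]; push_cast; ring
      rw [ZMod.natCast_self] at this
      linear_combination this
    rw [hbe, hdd, h1]; ring
  have hl0 : l = l[0] :: l.drop 1 := by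
    have := List.drop_eq_getElem_cons (h := h0)
    simpa using this
  rcases Nat.eq_zero_or_pos d with hd0 | hd1
  · have hbe' : b = l[0] := by rw [hbe, hd0]; simp
    have hinf : (b :: (([] : List (ZMod n)) ++ [b])) <:+: b :: l := by
      refine ⟨[], l.drop 1, ?_⟩
      rw [List.nil_append]
      conv_rhs => rw [hl0]
      rw [← hbe']
      rfl
    have := hnf b [] hinf
    simp at this
  · have hdle : d ≤ n - 2 := by omega
    have hld : l[d]'(by omega) = b := by rw [hget d (by omega), ← hbe]
    have hsplit : l = l.take d ++ (b :: l.drop (d+1)) := by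
      conv_lhs => rw [← List.take_append_drop d l]
      congr 1
      rw [List.drop_eq_getElem_cons (by omega : d < l.length), hld]
    have hinf : (b :: (l.take d ++ [b])) <:+: b :: l := by
      refine ⟨[], l.drop (d+1), ?_⟩
      rw [List.nil_append]
      conv_rhs => rw [hsplit]
      simp
    rcases hnf b (l.take d) hinf with hmem | ⟨_, hmem⟩
    · obtain ⟨j, hjlt, hj⟩ := List.mem_iff_getElem.1 hmem
      have hjd : j < d := by simp at hjlt; omega
      rw [List.getElem_take, hget j (by omega)] at hj
      rw [hbe] at hj
      have heq : ((j : ℕ) : ZMod n) = ((d : ℕ) : ZMod n) := by linear_combination hj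
      have := congrArg ZMod.val heq
      rw [ZMod.val_cast_of_lt (by omega), ZMod.val_cast_of_lt (by omega)] at this
      omega
    · obtain ⟨j, hjlt, hj⟩ := List.mem_iff_getElem.1 hmem
      have hjd : j < d := by simp at hjlt; omega
      rw [List.getElem_take, hget j (by omega)] at hj
      rw [hbe] at hj
      have heq : ((j : ℕ) : ZMod n) = ((d + 1 : ℕ) : ZMod n) := by push_cast; linear_combination hj
      have := congrArg ZMod.val heq
      rw [ZMod.val_cast_of_lt (by omega), ZMod.val_cast_of_lt (by omega)] at this
      omega

lemma chain_of_nf {n : ℕ} (hn : 3 ≤ n) {w : List (ZMod n)} (hnf : NF n w)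
    (v₁ m v₂ : List (ZMod n)) (hw : w = v₁ ++ (m ++ v₂)) (hm : Chain' (Step n) m)
    (hlen : n ≤ m.length) : Chain' (Step n) w := by
  have key1 : ∀ v : List (ZMod n), NF n (m ++ v) → Chain' (Step n) (m ++ v) := by
    intro v
    induction v using List.reverseRecOn with
    | nil => simpa using fun _ => hm
    | append_singleton t b ih =>
      intro hnf'
      have h1 : NF n (m ++ t) := hnf'.infix ⟨[], [b], by simp⟩
      have h2 := ih h1
      have hlen2 : n ≤ (m ++ t).length := by simp; omega
      have hne : m ++ t ≠ [] := by
        intro h; rw [h] at hlen2; simp at hlen2; omega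
      have hnf'' : NF n ((m ++ t) ++ [b]) := by rwa [List.append_assoc]
      have hstep := extR hn h2 hlen2 hnf'' hne
      rw [← List.append_assoc]
      unfold Chain'
      rw [List.isChain_append]
      refine ⟨h2, List.isChain_singleton _, ?_⟩
      intro x hx y hy
      rw [List.getLast?_eq_getLast hne] at hx
      simp at hx hy
      rw [Step, ← hx, ← hy]
      exact hstep
  have hchain2 : Chain' (Step n) (m ++ v₂) := by
    apply key1
    exact hnf.infix ⟨v₁, [], by rw [hw]; simp⟩
  have hlen2 : n ≤ (m ++ v₂).length := by simp; omega
  have key2 : ∀ v : List (ZMod n), NF n (v ++ (m ++ v₂)) → Chain' (Step n) (v ++ (m ++ v₂)) := by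
    intro v
    induction v with
    | nil => intro _; simpa using hchain2
    | cons a t ih =>
      intro hnf'
      have h1 : NF n (t ++ (m ++ v₂)) := hnf'.infix ⟨[a], [], by simp⟩
      have h2 := ih h1
      have hlen3 : n ≤ (t ++ (m ++ v₂)).length := by simp; omega
      have h0 : 0 < (t ++ (m ++ v₂)).length := by omega
      have hstep := extL hn h2 hlen3 (by simpa using hnf') h0
      rw [List.cons_append]
      unfold Chain'
      rw [List.isChain_cons]
      refine ⟨?_, h2⟩
      intro y hy
      have hne : t ++ (m ++ v₂) ≠ [] := List.length_pos_iff.1 h0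
      rw [List.head?_eq_head hne] at hy
      simp at hy
      rw [Step, ← hy, List.head_eq_getElem]
      exact hstep
  rw [hw]
  exact key2 v₁ (by rwa [← hw])

lemma chain_map_range' {n : ℕ} (hn : 3 ≤ n) (s k : ℕ) :
    Chain' (Step n) ((List.range' s k).map (fun j : ℕ => (j : ZMod n))) := by
  unfold Chain'
  rw [List.isChain_iff_getElem]
  intro i hi
  simp only [List.get_eq_getElem, List.getElem_map, List.getElem_range']
  rw [Step]
  push_cast
  ring

lemma chain_map_range'_neg {n : ℕ} (hn : 3 ≤ n) (s k : ℕ) :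
    Chain' (Dstep n) ((List.range' s k).map (fun j : ℕ => -(j : ZMod n))) := by
  unfold Chain'
  rw [List.isChain_iff_getElem]
  intro i hi
  simp only [List.get_eq_getElem, List.getElem_map, List.getElem_range']
  rw [Dstep]
  push_cast
  ring

lemma range'_infix_range (a L N : ℕ) (h : a + L ≤ N) :
    List.range' a L <:+: List.range N := by
  have : List.range' a L = (List.drop a (List.range N)).take L := by
    apply List.ext_getElem
    · simp; omega
    · intro i h1 h2
      rw [List.getElem_take, List.getElem_drop, List.getElem_range, List.getElem_range']
      omega
  rw [this]
  exact (((List.range N).drop a).take_prefix L).isInfix.trans ((List.range N).drop_suffix a).isInfix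

lemma chain_infix_asc {n : ℕ} (hn : 3 ≤ n) {l : List (ZMod n)} (hc : Chain' (Step n) l) :
    ∃ m, 1 ≤ m ∧ l <:+: (List.range (n * m)).map (fun j : ℕ => (j : ZMod n)) := by
  haveI : NeZero n := ⟨by omega⟩
  rcases eq_or_ne l [] with rfl | hne
  · exact ⟨1, le_refl 1, List.nil_infix⟩
  · have h0 : 0 < l.length := List.length_pos_iff.2 hne
    have hget := chain_step_getElem hc h0
    set a := l[0] with ha
    refine ⟨a.val + l.length + 1, by omega, ?_⟩
    have hle : a.val + l.length ≤ n * (a.val + l.length + 1) := by nlinarith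
    have heq : l = (List.range' a.val l.length).map (fun j : ℕ => (j : ZMod n)) := by
      apply List.ext_getElem
      · simp
      · intro i h1 h2
        rw [List.getElem_map, List.getElem_range', hget i h1]
        push_cast
        rw [ZMod.natCast_val]
        simp
    have h2 := (range'_infix_range a.val l.length _ hle).map (fun j : ℕ => (j : ZMod n))
    rwa [← heq] at h2

lemma chain_infix_desc {n : ℕ} (hn : 3 ≤ n) {l : List (ZMod n)} (hc : Chain' (Dstep n) l) :
    ∃ m, 1 ≤ m ∧ l <:+: (List.range (n * m)).map (fun j : ℕ => -(j : ZMod n)) := by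
  haveI : NeZero n := ⟨by omega⟩
  rcases eq_or_ne l [] with rfl | hne
  · exact ⟨1, le_refl 1, List.nil_infix⟩
  · have h0 : 0 < l.length := List.length_pos_iff.2 hne
    have hget := chain_dstep_getElem hc h0
    set a := l[0] with ha
    refine ⟨(-a).val + l.length + 1, by omega, ?_⟩
    have hle : (-a).val + l.length ≤ n * ((-a).val + l.length + 1) := by nlinarith
    have heq : l = (List.range' (-a).val l.length).map (fun j : ℕ => -(j : ZMod n)) := by
      apply List.ext_getElem
      · simp
      · intro i h1 h2
        rw [List.getElem_map, List.getElem_range', hget i h1]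
        push_cast
        rw [ZMod.natCast_val]
        simp
        ring
    have h2 := (range'_infix_range (-a).val l.length _ hle).map (fun j : ℕ => -(j : ZMod n))
    rwa [← heq] at h2

lemma reduced_nf {n : ℕ} (hn : 3 ≤ n) {w : FreeMonoid (ZMod n)} (h : Reduced n w) :
    NF n (FreeMonoid.toList w) := by
  intro a u hinf
  by_contra hcon
  push_neg at hcon
  obtain ⟨ha, hor⟩ := hcon
  obtain ⟨i, hi1, hin, hia⟩ := exists_rep (by omega : 0 < n) a
  have hfac : IsFactor (fx n i * FreeMonoid.ofList u * fx n i) w := by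
    rw [isFactor_iff_infix]
    simp only [FreeMonoid.toList_mul, FreeMonoid.toList_ofList, fx, FreeMonoid.toList_of, hia]
    have : ([a] ++ u) ++ [a] = a :: (u ++ [a]) := by simp
    rwa [this]
  rcases eq_or_ne u [] with rfl | hune
  · apply h.1 i hi1 hin
    have : (fx n i * FreeMonoid.ofList [] * fx n i) = fx n i * fx n i := by
      apply FreeMonoid.toList.injective; simp
    rwa [this] at hfac
  · have hu1 : FreeMonoid.ofList u ≠ 1 := by
      intro hh
      apply hune
      have := congrArg FreeMonoid.toList hh
      simpa using this
    have hcnt : cnt n (FreeMonoid.ofList u) ((i : ZMod n)) = 0 := by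
      rw [cnt, FreeMonoid.toList_ofList, List.count_eq_zero, hia]; exact ha
    by_cases hb : a - 1 ∈ u
    · apply h.2.2.2.2 i (FreeMonoid.ofList u) hi1 hin hu1 hcnt _ hfac
      rw [cnt, FreeMonoid.toList_ofList, List.count_eq_zero, hia]; exact hor hb
    · apply h.2.2.2.1 i (FreeMonoid.ofList u) hi1 hin hu1 hcnt _ hfac
      rw [cnt, FreeMonoid.toList_ofList, List.count_eq_zero, hia]; exact hb

lemma casc_list {n : ℕ} (hn : 3 ≤ n) :
    FreeMonoid.toList (fx n n * asc n 1 (n - 1)) =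
      (List.range n).map (fun j : ℕ => (j : ZMod n)) := by
  have h1 : n - 1 + 1 - 1 = n - 1 := by omega
  have h2 : List.range n = 0 :: List.range' 1 (n - 1) := by
    conv_lhs => rw [show n = (n-1)+1 by omega]
    rw [List.range_eq_range', List.range'_succ]
  rw [h2, List.map_cons, FreeMonoid.toList_mul, fx, FreeMonoid.toList_of, asc,
    FreeMonoid.toList_ofList, h1, ZMod.natCast_self, Nat.cast_zero, List.singleton_append]
  simp [List.bind_eq_flatMap, ← List.map_eq_flatMap]

lemma cdesc_list {n : ℕ} (hn : 3 ≤ n) :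
    FreeMonoid.toList (fx n n * desc n (n - 1) 1) =
      (List.range n).map (fun j : ℕ => -(j : ZMod n)) := by
  have h1 : n - 1 + 1 - 1 = n - 1 := by omega
  have h2 : List.range n = 0 :: (List.range (n-1)).map Nat.succ := by
    conv_lhs => rw [show n = (n-1)+1 by omega]
    exact List.range_succ_eq_map
  have hdl : FreeMonoid.toList (desc n (n - 1) 1) =
      (List.map (fun k : ℕ => (k : ZMod n)) (List.range' 1 (n - 1))).reverse := by
    rw [desc, FreeMonoid.toList_ofList, h1]
    simp [List.bind_eq_flatMap, ← List.map_eq_flatMap]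
  rw [h2, List.map_cons, List.map_map, FreeMonoid.toList_mul, fx, FreeMonoid.toList_of, hdl,
    ← List.map_reverse, List.reverse_range', List.map_map,
    ZMod.natCast_self, List.singleton_append]
  rw [Nat.cast_zero, neg_zero]
  congr 1
  apply List.map_congr_left
  intro x hx
  rw [List.mem_range] at hx
  simp only [Function.comp]
  have hsum : (1 + (n - 1) - 1 - x) + (Nat.succ x) = n := by omega
  have : ((1 + (n - 1) - 1 - x : ℕ) : ZMod n) + ((Nat.succ x : ℕ) : ZMod n) = 0 := by
    rw [← Nat.cast_add, hsum, ZMod.natCast_self]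
  linear_combination this

lemma casc_pow_list {n : ℕ} (hn : 3 ≤ n) (m : ℕ) :
    FreeMonoid.toList ((fx n n * asc n 1 (n - 1)) ^ m) =
      (List.range (n * m)).map (fun j : ℕ => (j : ZMod n)) := by
  induction m with
  | zero => simp
  | succ k ih =>
    rw [pow_succ, FreeMonoid.toList_mul, ih, casc_list hn, Nat.mul_succ, List.range_add,
      List.map_append, List.map_map]
    congr 1
    apply List.map_congr_left
    intro x hx
    simp only [Function.comp]
    have : ((n * k + x : ℕ) : ZMod n) = ((x : ℕ) : ZMod n) := by
      push_cast [ZMod.natCast_self]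
      ring
    exact this.symm

lemma cdesc_pow_list {n : ℕ} (hn : 3 ≤ n) (m : ℕ) :
    FreeMonoid.toList ((fx n n * desc n (n - 1) 1) ^ m) =
      (List.range (n * m)).map (fun j : ℕ => -(j : ZMod n)) := by
  induction m with
  | zero => simp
  | succ k ih =>
    rw [pow_succ, FreeMonoid.toList_mul, ih, cdesc_list hn, Nat.mul_succ, List.range_add,
      List.map_append, List.map_map]
    congr 1
    apply List.map_congr_left
    intro x hx
    simp only [Function.comp]
    have : ((n * k + x : ℕ) : ZMod n) = ((x : ℕ) : ZMod n) := by
      push_cast [ZMod.natCast_self]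
      ring
    rw [this]

end Aux

/-- Lemma 2.5 (lem4): reduced words containing `x_n x_1 ⋯ x_{n-1}` (resp.
`x_n x_{n-1} ⋯ x_1`) are factors of powers of that word. -/
theorem stmt4 (n : ℕ) (hn : 3 ≤ n) (w : FreeMonoid (ZMod n)) (hred : Reduced n w) :
    (IsFactor (fx n n * asc n 1 (n - 1)) w →
      ∃ m : ℕ, 1 ≤ m ∧ IsFactor w ((fx n n * asc n 1 (n - 1)) ^ m)) ∧
    (IsFactor (fx n n * desc n (n - 1) 1) w →
      ∃ m : ℕ, 1 ≤ m ∧ IsFactor w ((fx n n * desc n (n - 1) 1) ^ m)) := by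
  have hnf := reduced_nf hn hred
  constructor
  · intro hf
    rw [isFactor_iff_infix] at hf
    obtain ⟨v₁, v₂, hw⟩ := hf
    have hchain : List.Chain' (Step n) (FreeMonoid.toList w) := by
      apply chain_of_nf hn hnf v₁ (FreeMonoid.toList (fx n n * asc n 1 (n - 1))) v₂
      · rw [← hw, List.append_assoc]
      · rw [casc_list hn, List.range_eq_range']
        exact chain_map_range' hn 0 n
      · rw [casc_list hn]
        simp
    obtain ⟨m, hm1, hminf⟩ := chain_infix_asc hn hchain
    exact ⟨m, hm1, by rw [isFactor_iff_infix, casc_pow_list hn]; exact hminf⟩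
  · intro hf
    rw [isFactor_iff_infix] at hf
    obtain ⟨v₁, v₂, hw⟩ := hf
    have hrevchain : List.Chain' (Step n) (FreeMonoid.toList w).reverse := by
      apply chain_of_nf hn hnf.rev v₂.reverse
        (FreeMonoid.toList (fx n n * desc n (n - 1) 1)).reverse v₁.reverse
      · rw [← hw]
        simp [List.reverse_append, List.append_assoc]
      · unfold List.Chain'
        rw [List.isChain_reverse]
        have hcd : List.Chain' (Dstep n) (FreeMonoid.toList (fx n n * desc n (n - 1) 1)) := by
          rw [cdesc_list hn, List.range_eq_range']
          exact chain_map_range'_neg hn 0 n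
        exact hcd.imp (fun a b hab => by
          show Step n b a
          rw [Dstep] at hab
          rw [Step, hab]
          ring)
      · rw [List.length_reverse, cdesc_list hn]
        simp
    have hchain : List.Chain' (Dstep n) (FreeMonoid.toList w) := by
      have h2 := List.isChain_reverse.1 hrevchain
      exact h2.imp (fun a b hab => by
        have : a = b + 1 := hab
        rw [Dstep, this]
        ring)
    obtain ⟨m, hm1, hminf⟩ := chain_infix_desc hn hchain
    exact ⟨m, hm1, by rw [isFactor_iff_infix, cdesc_pow_list hn]; exact hminf⟩


end HK
end

section
/- Let n ≥ 3 and 0 ≤ i ≤ n−3. Then I_{i+1} ⊆ I_i; equivalently, for every w ∈ C_n, if there exist u, v ∈ C_n and k ≥ 1 with u w v = (x_n q_i)^k in C_n, then there exist u', v' ∈ C_n and m ≥ 1 with u' w v' = (x_n q_{i+1})^m in C_n. -/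
namespace HK

-- auxiliary development, to be inserted before stmt6
section Aux

variable {n : ℕ}

def L (n : ℕ) (a : ZMod n) : Cn n := pr n (FreeMonoid.of a)
def P (n s : ℕ) : Cn n := pr n (fx n s)
def D (n a b : ℕ) : Cn n := pr n (desc n a b)
def A (n t : ℕ) : Cn n := pr n (asc n 0 t)
def Xx (n i : ℕ) : Cn n := pr n (fx n n * qw n i)

lemma rel_pr {u v : FreeMonoid (ZMod n)} (h : cnRel n u v) : pr n u = pr n v :=
  (Con.eq _).mpr (ConGen.Rel.of _ _ h)

lemma cast_succ (s : ℕ) : ((s + 1 : ℕ) : ZMod n) = (s : ZMod n) + 1 := by push_cast; ring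

lemma P_eq (s : ℕ) : P n s = L n (s : ZMod n) := rfl

lemma P_succ (s : ℕ) : P n (s+1) = L n ((s : ZMod n) + 1) := by
  rw [P, fx, cast_succ]; rfl

lemma L_idem (a : ZMod n) : L n a * L n a = L n a := by
  rw [L, ← map_mul]; exact rel_pr (Or.inl ⟨a, rfl, rfl⟩)

lemma P_idem (s : ℕ) : P n s * P n s = P n s := L_idem _

lemma L_comm {a b : ZMod n} (h1 : b ≠ a + 1) (h2 : a ≠ b + 1) :
    L n a * L n b = L n b * L n a := by
  rw [L, L, ← map_mul, ← map_mul]; exact rel_pr (Or.inr (Or.inl ⟨a, b, h1, h2, rfl, rfl⟩))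

lemma L_braid1 (a : ZMod n) : L n a * (L n (a+1) * L n a) = L n a * L n (a+1) := by
  simp only [L, ← map_mul, ← mul_assoc]
  exact rel_pr (Or.inr (Or.inr ⟨a, Or.inl rfl, rfl⟩))

lemma L_braid2 (a : ZMod n) : L n (a+1) * (L n a * L n (a+1)) = L n a * L n (a+1) := by
  simp only [L, ← map_mul, ← mul_assoc]
  exact rel_pr (Or.inr (Or.inr ⟨a, Or.inr rfl, rfl⟩))

lemma cast_ne {s t : ℕ} (hs : s < n) (ht : t < n) (h : s ≠ t) :
    (s : ZMod n) ≠ (t : ZMod n) := by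
  rw [Ne, ZMod.natCast_eq_natCast_iff', Nat.mod_eq_of_lt hs, Nat.mod_eq_of_lt ht]; exact h

lemma ne_cast_add_one {s t : ℕ} (hn : 0 < n) (ht : t < n) (hs : s + 1 ≤ n)
    (h : s + 1 < n → t ≠ s + 1) (h0 : s + 1 = n → t ≠ 0) :
    (t : ZMod n) ≠ (s : ZMod n) + 1 := by
  rw [← cast_succ, show ((s+1 : ℕ) : ZMod n) = (((s+1) % n : ℕ) : ZMod n) from
    (ZMod.natCast_mod (s+1) n).symm]
  refine cast_ne ht (Nat.mod_lt _ hn) ?_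
  rcases Nat.lt_or_ge (s+1) n with hlt | hge
  · rw [Nat.mod_eq_of_lt hlt]; exact h hlt
  · have hsn : s + 1 = n := le_antisymm hs hge
    rw [hsn, Nat.mod_self]; exact h0 hsn

lemma cm_pair {s t : ℕ} (hn : 0 < n) (hs : s < n) (ht : t < n)
    (c1 : s + 1 < n → t ≠ s + 1) (c1' : s + 1 = n → t ≠ 0)
    (c2 : t + 1 < n → s ≠ t + 1) (c2' : t + 1 = n → s ≠ 0) :
    (t : ZMod n) ≠ (s : ZMod n) + 1 ∧ (s : ZMod n) ≠ (t : ZMod n) + 1 :=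
  ⟨ne_cast_add_one hn ht (by omega) c1 c1', ne_cast_add_one hn hs (by omega) c2 c2'⟩

lemma P_comm {s t : ℕ} (hn : 0 < n) (hs : s < n) (ht : t < n)
    (c1 : s + 1 < n → t ≠ s + 1) (c1' : s + 1 = n → t ≠ 0)
    (c2 : t + 1 < n → s ≠ t + 1) (c2' : t + 1 = n → s ≠ 0) :
    P n s * P n t = P n t * P n s := by
  obtain ⟨h1, h2⟩ := cm_pair hn hs ht c1 c1' c2 c2'
  exact L_comm h1 h2

-- word level splitting
lemma asc_split (a b c : ℕ) (h1 : a ≤ c + 1) (h2 : c ≤ b) :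
    asc n a b = asc n a c * asc n (c+1) b := by
  rw [asc, asc, asc, ← FreeMonoid.ofList_append, ← List.map_append]
  have e1 : a + 1 * (c + 1 - a) = c + 1 := by omega
  have e2 : (c + 1 - a) + (b - c) = b + 1 - a := by omega
  have e3 : b + 1 - (c + 1) = b - c := by omega
  rw [e3, ← e2, ← List.range'_append, e1]
  simp [List.map_append]

lemma desc_split (a b c : ℕ) (h1 : b ≤ c + 1) (h2 : c ≤ a) :
    desc n a b = desc n a (c+1) * desc n c b := by
  rw [desc, desc, desc, ← FreeMonoid.ofList_append, ← List.reverse_append, ← List.map_append]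
  have e1 : b + 1 * (c + 1 - b) = c + 1 := by omega
  have e2 : (c + 1 - b) + (a - c) = a + 1 - b := by omega
  have e3 : a + 1 - (c + 1) = a - c := by omega
  rw [e3, ← e2, ← List.range'_append, e1]
  simp [List.map_append]

lemma asc_single (a : ℕ) : asc n a a = fx n a := by
  simp [asc, fx, FreeMonoid.ofList_singleton]

lemma desc_single (a : ℕ) : desc n a a = fx n a := by
  simp [desc, fx, FreeMonoid.ofList_singleton]

-- Cn-level structure lemmas
lemma D_split (a b c : ℕ) (h1 : b ≤ c + 1) (h2 : c ≤ a) :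
    D n a b = D n a (c+1) * D n c b := by
  rw [D, D, D, desc_split a b c h1 h2, map_mul]

lemma D_single (a : ℕ) : D n a a = P n a := by rw [D, desc_single]; rfl

lemma D_bot {a b : ℕ} (h : b ≤ a) : D n a b = D n a (b+1) * P n b := by
  rw [D_split a b b (by omega) h, D_single]

lemma D_top {a b : ℕ} (h0 : 1 ≤ a) (h : b ≤ a) : D n a b = P n a * D n (a-1) b := by
  have h3 : a - 1 + 1 = a := by omega
  have := D_split (n := n) a b (a-1) (by omega) (by omega)
  rw [h3] at this
  rw [this, D_single]

lemma A_zero : A n 0 = P n 0 := by rw [A, asc_single]; rfl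

lemma A_succ (t : ℕ) : A n (t+1) = A n t * P n (t+1) := by
  rw [A, A, asc_split 0 (t+1) t (by omega) (by omega), map_mul, asc_single]; rfl

lemma A_split {s t : ℕ} (h : s ≤ t) : A n t = A n s * pr n (asc n (s+1) t) := by
  rw [A, A, asc_split 0 t s (by omega) h, map_mul]

-- block commutation
lemma asc_empty {a b : ℕ} (h : b < a) : asc n a b = 1 := by
  have : b + 1 - a = 0 := by omega
  simp [asc, this]

lemma desc_empty {a b : ℕ} (h : a < b) : desc n a b = 1 := by
  have : a + 1 - b = 0 := by omega
  simp [desc, this]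

lemma P_comm_desc {s a : ℕ} : ∀ b : ℕ,
    (∀ t : ℕ, b ≤ t → t ≤ a →
      ((t : ZMod n) ≠ (s : ZMod n) + 1 ∧ (s : ZMod n) ≠ (t : ZMod n) + 1)) →
    P n s * D n a b = D n a b * P n s := by
  suffices H : ∀ k b : ℕ, a + 1 - b ≤ k →
      (∀ t : ℕ, b ≤ t → t ≤ a →
        ((t : ZMod n) ≠ (s : ZMod n) + 1 ∧ (s : ZMod n) ≠ (t : ZMod n) + 1)) →
      P n s * D n a b = D n a b * P n s by
    intro b hb; exact H (a + 1 - b) b le_rfl hb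
  intro k
  induction k with
  | zero =>
      intro b hk _
      rw [D, desc_empty (by omega), map_one, one_mul, mul_one]
  | succ k ih =>
      intro b hk hcond
      rcases Nat.lt_or_ge a b with hab | hab
      · rw [D, desc_empty hab, map_one, one_mul, mul_one]
      · obtain ⟨h1, h2⟩ := hcond b le_rfl (by omega)
        rw [D_bot hab, ← mul_assoc, ih (b+1) (by omega)
            (fun t ht1 ht2 => hcond t (by omega) ht2), mul_assoc,
          show P n s * P n b = P n b * P n s from L_comm h1 h2, ← mul_assoc]

lemma P_comm_asc {s b : ℕ} : ∀ a : ℕ,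
    (∀ t : ℕ, a ≤ t → t ≤ b →
      ((t : ZMod n) ≠ (s : ZMod n) + 1 ∧ (s : ZMod n) ≠ (t : ZMod n) + 1)) →
    P n s * pr n (asc n a b) = pr n (asc n a b) * P n s := by
  suffices H : ∀ k a : ℕ, b + 1 - a ≤ k →
      (∀ t : ℕ, a ≤ t → t ≤ b →
        ((t : ZMod n) ≠ (s : ZMod n) + 1 ∧ (s : ZMod n) ≠ (t : ZMod n) + 1)) →
      P n s * pr n (asc n a b) = pr n (asc n a b) * P n s by
    intro a ha; exact H (b + 1 - a) a le_rfl ha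
  intro k
  induction k with
  | zero =>
      intro a hk _
      rw [asc_empty (by omega), map_one, one_mul, mul_one]
  | succ k ih =>
      intro a hk hcond
      rcases Nat.lt_or_ge b a with hab | hab
      · rw [asc_empty hab, map_one, one_mul, mul_one]
      · obtain ⟨h1, h2⟩ := hcond a le_rfl (by omega)
        rw [asc_split a b a (by omega) hab, asc_single, map_mul, ← mul_assoc,
          show P n s * pr n (fx n a) = pr n (fx n a) * P n s from L_comm h1 h2,
          mul_assoc, ih (a+1) (by omega) (fun t ht1 ht2 => hcond t (by omega) ht2),
          ← mul_assoc]

lemma fx_nn : fx n n = fx n 0 := by rw [fx, fx, ZMod.natCast_self, Nat.cast_zero]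

lemma Xx_eq (i : ℕ) : Xx n i = A n i * D n (n-1) (i+1) := by
  rw [Xx, qw, map_mul, map_mul, fx_nn, ← mul_assoc, A,
    asc_split 0 i 0 (by omega) (by omega), asc_single, map_mul, D]


-- braid lemmas, nat-indexed, tail and continuation forms
lemma P_braid1_t (s : ℕ) : P n s * (P n (s+1) * P n s) = P n s * P n (s+1) := by
  simp only [P_succ, P_eq]; exact L_braid1 _

lemma P_braid2_t (s : ℕ) : P n (s+1) * (P n s * P n (s+1)) = P n s * P n (s+1) := by
  simp only [P_succ, P_eq]; exact L_braid2 _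

lemma P_braid1_k (s : ℕ) (z : Cn n) :
    P n s * (P n (s+1) * (P n s * z)) = P n s * (P n (s+1) * z) := by
  rw [show P n s * (P n (s+1) * (P n s * z)) = (P n s * (P n (s+1) * P n s)) * z by
    simp only [mul_assoc], P_braid1_t, mul_assoc]

lemma P_braid2_k (s : ℕ) (z : Cn n) :
    P n (s+1) * (P n s * (P n (s+1) * z)) = P n s * (P n (s+1) * z) := by
  rw [show P n (s+1) * (P n s * (P n (s+1) * z)) = (P n (s+1) * (P n s * P n (s+1))) * z by
    simp only [mul_assoc], P_braid2_t, mul_assoc]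

lemma cast_wrap (hn : 1 ≤ n) : ((n - 1 : ℕ) : ZMod n) + 1 = ((0 : ℕ) : ZMod n) := by
  rw [← cast_succ, show n - 1 + 1 = n by omega, ZMod.natCast_self, Nat.cast_zero]

lemma P_wrap1_t (hn : 1 ≤ n) : P n (n-1) * (P n 0 * P n (n-1)) = P n (n-1) * P n 0 := by
  have h := L_braid1 (n := n) ((n-1 : ℕ) : ZMod n)
  rwa [cast_wrap hn] at h

lemma P_wrap2_t (hn : 1 ≤ n) : P n 0 * (P n (n-1) * P n 0) = P n (n-1) * P n 0 := by
  have h := L_braid2 (n := n) ((n-1 : ℕ) : ZMod n)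
  rwa [cast_wrap hn] at h

lemma P_wrap1_k (hn : 1 ≤ n) (z : Cn n) :
    P n (n-1) * (P n 0 * (P n (n-1) * z)) = P n (n-1) * (P n 0 * z) := by
  rw [show P n (n-1) * (P n 0 * (P n (n-1) * z)) = (P n (n-1) * (P n 0 * P n (n-1))) * z by
    simp only [mul_assoc], P_wrap1_t hn, mul_assoc]

lemma P_wrap2_k (hn : 1 ≤ n) (z : Cn n) :
    P n 0 * (P n (n-1) * (P n 0 * z)) = P n (n-1) * (P n 0 * z) := by
  rw [show P n 0 * (P n (n-1) * (P n 0 * z)) = (P n 0 * (P n (n-1) * P n 0)) * z by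
    simp only [mul_assoc], P_wrap2_t hn, mul_assoc]

-- absorption
lemma A_end (t : ℕ) : A n t * P n t = A n t := by
  cases t with
  | zero => rw [A_zero, P_idem]
  | succ r => rw [A_succ, mul_assoc, P_idem]

lemma A_braid (t : ℕ) : A n (t+1) * P n t = A n (t+1) := by
  cases t with
  | zero => rw [A_succ, A_zero, mul_assoc, P_braid1_t]
  | succ r => simp only [A_succ, mul_assoc]; rw [P_braid1_t]

lemma absorb_right {s t : ℕ} (hn : 3 ≤ n) (hst : s ≤ t) (ht : t ≤ n - 2) :
    A n t * P n s = A n t := by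
  induction t with
  | zero =>
      have hs0 : s = 0 := by omega
      rw [hs0]; exact A_end 0
  | succ r ih =>
      rcases Nat.lt_or_ge s (r+1) with h | h
      · rcases Nat.lt_or_ge s r with h' | h'
        · rw [A_succ, mul_assoc,
            P_comm (s := r+1) (t := s) (by omega) (by omega) (by omega)
              (by omega) (by omega) (by omega) (by omega),
            ← mul_assoc, ih (by omega) (by omega), ← A_succ]
        · have hsr : s = r := by omega
          rw [hsr]; exact A_braid r
      · have hsr : s = r + 1 := by omega
        rw [hsr]; exact A_end (r+1)

lemma P_self_A {s : ℕ} (hn : 3 ≤ n) (hs : s ≤ n - 2) : P n s * A n s = A n s := by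
  match s with
  | 0 => rw [A_zero, P_idem]
  | 1 => rw [A_succ, A_zero, P_braid2_t]
  | (r+2) =>
      show P n (r+1+1) * A n (r+1+1) = A n (r+1+1)
      have hA : P n (r+1+1) * A n r = A n r * P n (r+1+1) := by
        apply P_comm_asc
        intro t ht1 ht2
        exact cm_pair (by omega) (by omega) (by omega) (by omega) (by omega)
          (by omega) (by omega)
      rw [A_succ (r+1), A_succ r]
      simp only [mul_assoc]
      rw [← mul_assoc, hA, mul_assoc, P_braid2_t]

lemma absorb_left {s t : ℕ} (hn : 3 ≤ n) (hst : s ≤ t) (ht : t ≤ n - 2) :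
    P n s * A n t = A n t := by
  rw [A_split hst, ← mul_assoc, P_self_A hn (by omega)]

lemma A_A {s t : ℕ} (hn : 3 ≤ n) (hst : s ≤ t) (ht : t ≤ n - 2) :
    A n t * A n s = A n t := by
  induction s with
  | zero => rw [A_zero]; exact absorb_right hn (by omega) ht
  | succ r ih =>
      rw [A_succ, ← mul_assoc, ih (by omega), absorb_right hn hst ht]

-- primed variants avoiding syntactic `+1+1` mismatches
lemma D_split' (a b c d : ℕ) (h1 : b ≤ d) (h2 : c ≤ a) (h3 : d = c + 1) :
    D n a b = D n a d * D n c b := by subst h3; exact D_split a b c (by omega) h2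

lemma D_bot' (a b b' : ℕ) (h : b ≤ a) (h3 : b' = b + 1) :
    D n a b = D n a b' * P n b := by subst h3; exact D_bot h

lemma D_top' (a b a' : ℕ) (h0 : 1 ≤ a) (h : b ≤ a) (h3 : a' = a - 1) :
    D n a b = P n a * D n a' b := by subst h3; exact D_top h0 h

lemma A_succ' (t t' : ℕ) (h : t' = t + 1) : A n t' = A n t * P n t' := by
  subst h; exact A_succ t

lemma P_braid1_t' (s s' : ℕ) (h : s' = s + 1) :
    P n s * (P n s' * P n s) = P n s * P n s' := by subst h; exact P_braid1_t s

lemma P_braid2_t' (s s' : ℕ) (h : s' = s + 1) :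
    P n s' * (P n s * P n s') = P n s * P n s' := by subst h; exact P_braid2_t s

lemma P_braid1_k' (s s' : ℕ) (h : s' = s + 1) (z : Cn n) :
    P n s * (P n s' * (P n s * z)) = P n s * (P n s' * z) := by
  subst h; exact P_braid1_k s z

lemma P_braid2_k' (s s' : ℕ) (h : s' = s + 1) (z : Cn n) :
    P n s' * (P n s * (P n s' * z)) = P n s * (P n s' * z) := by
  subst h; exact P_braid2_k s z

-- the K step: x_s · desc(n-1,s) = x_s · desc(n-1,s+1)
lemma Klem {s : ℕ} (hn : 3 ≤ n) (hs1 : 1 ≤ s) (hs2 : s ≤ n - 2) :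
    P n s * D n (n-1) s = P n s * D n (n-1) (s+1) := by
  have hsplit : D n (n-1) s = D n (n-1) (s+2) * (P n (s+1) * P n s) := by
    rw [D_split' (n-1) s (s+1) (s+2) (by omega) (by omega) (by omega),
      D_split' (s+1) s s (s+1) (by omega) (by omega) (by omega), D_single, D_single]
  have hc : P n s * D n (n-1) (s+2) = D n (n-1) (s+2) * P n s := by
    apply P_comm_desc
    intro t ht1 ht2
    exact cm_pair (by omega) (by omega) (by omega) (by omega) (by omega)
      (by omega) (by omega)
  calc P n s * D n (n-1) s
      = P n s * (D n (n-1) (s+2) * (P n (s+1) * P n s)) := by rw [hsplit]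
    _ = (D n (n-1) (s+2) * P n s) * (P n (s+1) * P n s) := by rw [← mul_assoc, hc]
    _ = D n (n-1) (s+2) * (P n s * (P n (s+1) * P n s)) := by simp only [mul_assoc]
    _ = D n (n-1) (s+2) * (P n s * P n (s+1)) := by rw [P_braid1_t' s (s+1) rfl]
    _ = (D n (n-1) (s+2) * P n s) * P n (s+1) := by rw [mul_assoc]
    _ = P n s * (D n (n-1) (s+2) * P n (s+1)) := by rw [← hc, mul_assoc]
    _ = P n s * D n (n-1) (s+1) := by
        rw [← D_bot' (n-1) (s+1) (s+2) (by omega) (by omega)]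

-- the q-step: X_i · x_{i+2} = X_{i+1}
lemma qstep {i : ℕ} (hn : 3 ≤ n) (hi : i ≤ n - 3) :
    Xx n i * P n (i+2) = Xx n (i+1) := by
  have hsplit : D n (n-1) (i+1) = D n (n-1) (i+3) * (P n (i+2) * P n (i+1)) := by
    rw [D_split' (n-1) (i+1) (i+2) (i+3) (by omega) (by omega) (by omega),
      D_split' (i+2) (i+1) (i+1) (i+2) (by omega) (by omega) (by omega),
      D_single, D_single]
  have hc : P n (i+1) * D n (n-1) (i+3) = D n (n-1) (i+3) * P n (i+1) := by
    apply P_comm_desc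
    intro t ht1 ht2
    exact cm_pair (by omega) (by omega) (by omega) (by omega) (by omega)
      (by omega) (by omega)
  calc Xx n i * P n (i+2)
      = A n i * (D n (n-1) (i+3) * (P n (i+2) * (P n (i+1) * P n (i+2)))) := by
        simp only [Xx_eq, hsplit, mul_assoc]
    _ = A n i * (D n (n-1) (i+3) * (P n (i+1) * P n (i+2))) := by
        rw [P_braid2_t' (i+1) (i+2) (by omega)]
    _ = A n i * (P n (i+1) * (D n (n-1) (i+3) * P n (i+2))) := by
        rw [← mul_assoc (D n (n-1) (i+3)), ← hc, mul_assoc]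
    _ = Xx n (i+1) := by
        rw [Xx_eq, A_succ' i (i+1) rfl,
          ← D_bot' (n-1) (i+2) (i+3) (by omega) (by omega)]
        simp only [mul_assoc]

-- middle push: x_j · X_i = X_i · x_{j+1}  for i+2 ≤ j ≤ n-2
lemma push_mid {i j : ℕ} (hn : 3 ≤ n) (hi : i ≤ n - 3) (hj1 : i + 2 ≤ j) (hj2 : j ≤ n - 2) :
    P n j * Xx n i = Xx n i * P n (j+1) := by
  have hsplit : D n (n-1) (i+1) = D n (n-1) (j+2) * (P n (j+1) * (P n j * D n (j-1) (i+1))) := by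
    rw [D_split' (n-1) (i+1) (j+1) (j+2) (by omega) (by omega) (by omega),
      D_top' (j+1) (i+1) j (by omega) (by omega) (by omega),
      D_top' j (i+1) (j-1) (by omega) (by omega) (by omega)]
  have hA : P n j * A n i = A n i * P n j := by
    apply P_comm_asc
    intro t ht1 ht2
    exact cm_pair (by omega) (by omega) (by omega) (by omega) (by omega)
      (by omega) (by omega)
  have hD2 : P n j * D n (n-1) (j+2) = D n (n-1) (j+2) * P n j := by
    apply P_comm_desc
    intro t ht1 ht2
    exact cm_pair (by omega) (by omega) (by omega) (by omega) (by omega)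
      (by omega) (by omega)
  have hD1 : P n (j+1) * D n (j-1) (i+1) = D n (j-1) (i+1) * P n (j+1) := by
    apply P_comm_desc
    intro t ht1 ht2
    exact cm_pair (by omega) (by omega) (by omega) (by omega) (by omega)
      (by omega) (by omega)
  calc P n j * Xx n i
      = P n j * (A n i * (D n (n-1) (j+2) * (P n (j+1) * (P n j * D n (j-1) (i+1))))) := by
        simp only [Xx_eq, hsplit, mul_assoc]
    _ = A n i * (P n j * (D n (n-1) (j+2) * (P n (j+1) * (P n j * D n (j-1) (i+1))))) := by
        rw [← mul_assoc, hA, mul_assoc]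
    _ = A n i * (D n (n-1) (j+2) * (P n j * (P n (j+1) * (P n j * D n (j-1) (i+1))))) := by
        rw [← mul_assoc (P n j) (D n (n-1) (j+2)), hD2, mul_assoc]
    _ = A n i * (D n (n-1) (j+2) * (P n j * (P n (j+1) * D n (j-1) (i+1)))) := by
        rw [P_braid1_k' j (j+1) rfl]
    _ = A n i * (D n (n-1) (j+2) * (P n (j+1) * (P n j * (P n (j+1) * D n (j-1) (i+1))))) := by
        rw [P_braid2_k' j (j+1) rfl]
    _ = A n i * (D n (n-1) (j+2) * (P n (j+1) * (P n j * (D n (j-1) (i+1) * P n (j+1))))) := by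
        rw [hD1]
    _ = Xx n i * P n (j+1) := by
        simp only [Xx_eq, hsplit, mul_assoc]

-- top push auxiliary: X_i · A_{i+1} = x_{n-1} · (A_i · desc(n-2, i+1))
lemma push_top_aux (hn : 3 ≤ n) : ∀ i, i ≤ n - 3 →
    Xx n i * A n (i+1) = P n (n-1) * (A n i * D n (n-2) (i+1)) := by
  intro i
  induction i with
  | zero =>
      intro _
      have e0 : Xx n 0 = P n 0 * D n (n-1) 1 := by
        rw [Xx_eq]; norm_num [A_zero]
      have h1 : D n (n-1) 1 = D n (n-1) 2 * P n 1 :=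
        D_bot' (n-1) 1 2 (by omega) rfl
      have h2 : D n (n-1) 2 = P n (n-1) * D n (n-2) 2 :=
        D_top' (n-1) 2 (n-2) (by omega) (by omega) (by omega)
      have h3 : P n 0 * D n (n-2) 2 = D n (n-2) 2 * P n 0 := by
        apply P_comm_desc
        intro t ht1 ht2
        exact cm_pair (by omega) (by omega) (by omega) (by omega) (by omega)
          (by omega) (by omega)
      have h4 : D n (n-2) 1 = D n (n-2) 2 * P n 1 :=
        D_bot' (n-2) 1 2 (by omega) rfl
      calc Xx n 0 * A n 1
          = P n 0 * (D n (n-1) 2 * (P n 1 * (P n 0 * P n 1))) := by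
            rw [e0, A_succ' 0 1 rfl, A_zero, h1]; simp only [mul_assoc]
        _ = P n 0 * (D n (n-1) 2 * (P n 0 * P n 1)) := by
            rw [P_braid2_t' 0 1 rfl]
        _ = P n 0 * (P n (n-1) * (D n (n-2) 2 * (P n 0 * P n 1))) := by
            rw [h2]; simp only [mul_assoc]
        _ = P n 0 * (P n (n-1) * (P n 0 * (D n (n-2) 2 * P n 1))) := by
            rw [← mul_assoc (D n (n-2) 2), ← h3, mul_assoc]
        _ = P n (n-1) * (P n 0 * (D n (n-2) 2 * P n 1)) := by
            rw [P_wrap2_k (by omega)]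
        _ = P n (n-1) * (A n 0 * D n (n-2) 1) := by rw [← h4, A_zero]
  | succ r ih =>
      intro hr
      have hr' : r ≤ n - 3 := by omega
      show Xx n (r+1) * A n (r+2) = P n (n-1) * (A n (r+1) * D n (n-2) (r+2))
      have hD3 : P n (r+1) * D n (n-2) (r+3) = D n (n-2) (r+3) * P n (r+1) := by
        apply P_comm_desc
        intro t ht1 ht2
        exact cm_pair (by omega) (by omega) (by omega) (by omega) (by omega)
          (by omega) (by omega)
      calc Xx n (r+1) * A n (r+2)
          = Xx n r * (P n (r+2) * A n (r+2)) := by rw [← qstep hn hr', mul_assoc]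
        _ = Xx n r * A n (r+2) := by
            rw [absorb_left hn (le_refl (r+2)) (by omega)]
        _ = (Xx n r * A n (r+1)) * P n (r+2) := by
            rw [A_succ' (r+1) (r+2) rfl, ← mul_assoc]
        _ = (P n (n-1) * (A n r * D n (n-2) (r+1))) * P n (r+2) := by rw [ih hr']
        _ = P n (n-1) * (A n r * (D n (n-2) (r+3) * (P n (r+2) * (P n (r+1) * P n (r+2))))) := by
            rw [D_bot' (n-2) (r+1) (r+2) (by omega) rfl,
              D_bot' (n-2) (r+2) (r+3) (by omega) rfl]
            simp only [mul_assoc]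
        _ = P n (n-1) * (A n r * (D n (n-2) (r+3) * (P n (r+1) * P n (r+2)))) := by
            rw [P_braid2_t' (r+1) (r+2) rfl]
        _ = P n (n-1) * (A n r * (P n (r+1) * (D n (n-2) (r+3) * P n (r+2)))) := by
            rw [← mul_assoc (D n (n-2) (r+3)), ← hD3, mul_assoc]
        _ = P n (n-1) * (A n (r+1) * D n (n-2) (r+2)) := by
            rw [← D_bot' (n-2) (r+2) (r+3) (by omega) rfl, A_succ' r (r+1) rfl]
            simp only [mul_assoc]

lemma push_top {i : ℕ} (hn : 3 ≤ n) (hi : i ≤ n - 3) :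
    P n (n-1) * Xx n i = Xx n i * A n (i+1) := by
  rw [push_top_aux hn i hi]
  have hAi : A n i = P n 0 * pr n (asc n 1 i) := by
    have h : asc n 0 i = fx n 0 * asc n 1 i := by
      rw [asc_split 0 i 0 (by omega) (by omega), asc_single]
    rw [A, h, map_mul]; rfl
  have hw : P n (n-1) * pr n (asc n 1 i) = pr n (asc n 1 i) * P n (n-1) := by
    apply P_comm_asc
    intro t ht1 ht2
    exact cm_pair (by omega) (by omega) (by omega) (by omega) (by omega)
      (by omega) (by omega)
  have hD : D n (n-1) (i+1) = P n (n-1) * D n (n-2) (i+1) :=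
    D_top' (n-1) (i+1) (n-2) (by omega) (by omega) (by omega)
  calc P n (n-1) * Xx n i
      = P n (n-1) * (P n 0 * (pr n (asc n 1 i) * (P n (n-1) * D n (n-2) (i+1)))) := by
        rw [Xx_eq, hAi, hD]; simp only [mul_assoc]
    _ = P n (n-1) * (P n 0 * (P n (n-1) * (pr n (asc n 1 i) * D n (n-2) (i+1)))) := by
        rw [← mul_assoc (pr n (asc n 1 i)), ← hw, mul_assoc]
    _ = P n (n-1) * (P n 0 * (pr n (asc n 1 i) * D n (n-2) (i+1))) := by
        rw [P_wrap1_k (by omega)]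
    _ = P n (n-1) * (A n i * D n (n-2) (i+1)) := by
        rw [hAi]; simp only [mul_assoc]

lemma push_B {i : ℕ} (hn : 3 ≤ n) (hi : i ≤ n - 3) :
    A n (i+1) * Xx n i = Xx n i * P n (i+2) := by
  rw [qstep hn hi, Xx_eq i, Xx_eq (i+1), ← mul_assoc, A_A hn (by omega) (by omega),
    A_succ' i (i+1) rfl]
  simp only [mul_assoc]
  rw [Klem hn (by omega) (by omega)]

def Tok (n i : ℕ) (z : Cn n) : Prop :=
  (∃ j : ℕ, i + 2 ≤ j ∧ j ≤ n - 1 ∧ z = P n j) ∨ z = A n (i+1)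

lemma tok_push {i : ℕ} (hn : 3 ≤ n) (hi : i ≤ n - 3) {z : Cn n} (hz : Tok n i z) :
    ∃ z', Tok n i z' ∧ z * Xx n i = Xx n i * z' := by
  rcases hz with ⟨j, hj1, hj2, rfl⟩ | rfl
  · rcases Nat.lt_or_ge j (n-1) with h | h
    · exact ⟨P n (j+1), Or.inl ⟨j+1, by omega, by omega, rfl⟩,
        push_mid hn hi hj1 (by omega)⟩
    · have hj : j = n - 1 := by omega
      rw [hj]
      exact ⟨A n (i+1), Or.inr rfl, push_top hn hi⟩
  · exact ⟨P n (i+2), Or.inl ⟨i+2, le_rfl, by omega, rfl⟩, push_B hn hi⟩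

lemma tok_pow {i : ℕ} (hn : 3 ≤ n) (hi : i ≤ n - 3) (k : ℕ) :
    ∃ z, Tok n i z ∧ P n (i+2) * (Xx n i)^k = (Xx n i)^k * z := by
  induction k with
  | zero => exact ⟨P n (i+2), Or.inl ⟨i+2, le_rfl, by omega, rfl⟩, by simp⟩
  | succ k ih =>
      obtain ⟨z, hz, he⟩ := ih
      obtain ⟨z', hz', he'⟩ := tok_push hn hi hz
      refine ⟨z', hz', ?_⟩
      rw [pow_succ, ← mul_assoc, he, mul_assoc, he', ← mul_assoc]

lemma Y_pow {i : ℕ} (hn : 3 ≤ n) (hi : i ≤ n - 3) (k : ℕ) :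
    ∃ w, (Xx n (i+1))^k = (Xx n i)^k * w := by
  induction k with
  | zero => exact ⟨1, by simp⟩
  | succ k ih =>
      obtain ⟨w, hw⟩ := ih
      obtain ⟨z, _, hz⟩ := tok_pow hn hi k
      refine ⟨z * w, ?_⟩
      rw [pow_succ', pow_succ', hw, ← qstep hn hi]
      simp only [mul_assoc]
      rw [← mul_assoc (P n (i+2)), hz, mul_assoc]

end Aux

/-- Lemma 3.5: `I_{i+1} ⊆ I_i`. -/
theorem stmt6 (n i : ℕ) (hn : 3 ≤ n) (hi : i ≤ n - 3) (w : Cn n)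
    (h : ∃ (u v : Cn n) (k : ℕ), 1 ≤ k ∧ u * w * v = (pr n (fx n n * qw n i)) ^ k) :
    ∃ (u' v' : Cn n) (m : ℕ), 1 ≤ m ∧
      u' * w * v' = (pr n (fx n n * qw n (i + 1))) ^ m := by
  obtain ⟨u, v, k, hk, he⟩ := h
  obtain ⟨wz, hwz⟩ := Y_pow (n := n) (i := i) hn hi k
  refine ⟨u, v * wz, k, hk, ?_⟩
  have hx : pr n (fx n n * qw n i) = Xx n i := rfl
  have hy : pr n (fx n n * qw n (i + 1)) = Xx n (i+1) := rfl
  rw [hy, hwz, ← hx, ← mul_assoc, he]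

end HK
end

section
/- Let n ≥ 3, 0 ≤ i ≤ n−2 and k ≥ 1. The map g = f((x_n q_i)^k) : ℤ^n → ℤ^n depends on exactly the n−i−1 coordinates with indices in {i+2,…,n}: whenever m, m' ∈ ℤ^n agree in all coordinates i+2,…,n, one has g(m) = g(m'); and for each c ∈ {i+2,…,n} there exist m, m' ∈ ℤ^n differing only in coordinate c with g(m) ≠ g(m'). -/
namespace HK

/-- The action of the generator `x_j` on `ℤ^n`: for `j < n` the `j`-th coordinate is
replaced by `m_{j+1}`, and `x_n` replaces the `n`-th coordinate by `m_1 + 1`.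
Coordinates `1,…,n` correspond to `Fin n` indices `0,…,n-1`, and letters are
`ZMod n` (the letter `0` is `x_n`). -/
def fgen (n : ℕ) (c : ZMod n) : Function.End (Fin n → ℤ) :=
  fun m t =>
    if ((t : ℕ) + 1 : ZMod n) = c then
      m ⟨((t : ℕ) + 1) % n, Nat.mod_lt _ t.pos⟩ + (if c = 0 then 1 else 0)
    else m t

/-- The homomorphism `f : F → Map(ℤ^n, ℤ^n)` (the rightmost letter acts first). -/
def fmap (n : ℕ) : FreeMonoid (ZMod n) →* Function.End (Fin n → ℤ) :=
  FreeMonoid.lift (fgen n)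

section lemmas

lemma natCast_zmod_inj (n : ℕ) (hn : 1 ≤ n) {a b : ℕ} (ha : a < n) (hb : b < n)
    (h : (a : ZMod n) = (b : ZMod n)) : a = b := by
  have : NeZero n := ⟨by omega⟩
  have h2 := (ZMod.natCast_eq_natCast_iff a b n).mp h
  rwa [Nat.ModEq, Nat.mod_eq_of_lt ha, Nat.mod_eq_of_lt hb] at h2

lemma meq (n : ℕ) (m : Fin n → ℤ) {a b : ℕ} (ha : a < n) (hb : b < n) (h : a = b) :
    m ⟨a, ha⟩ = m ⟨b, hb⟩ := by subst h; rfl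

lemma fgen_lt (n : ℕ) (hn : 1 ≤ n) (j : ℕ) (h1 : 1 ≤ j) (h2 : j < n)
    (m : Fin n → ℤ) (t : Fin n) :
    fgen n (j : ZMod n) m t = if (t:ℕ) + 1 = j then m ⟨j, h2⟩ else m t := by
  have hne : NeZero n := ⟨by omega⟩
  show (if (((t:ℕ) : ZMod n) + 1 = (j : ZMod n)) then _ else _) = _
  by_cases h : (t:ℕ) + 1 = j
  · have hc : ((t:ℕ) : ZMod n) + 1 = (j : ZMod n) := by rw [← h]; push_cast; ring
    rw [if_pos h, if_pos hc]
    have hj0 : (j : ZMod n) ≠ 0 := by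
      intro h0
      have := natCast_zmod_inj n hn h2 (by omega : 0 < n) (by simpa using h0)
      omega
    rw [if_neg hj0, add_zero]
    exact meq n m _ _ (by rw [h, Nat.mod_eq_of_lt h2])
  · have hc : ¬ (((t:ℕ) : ZMod n) + 1 = (j : ZMod n)) := by
      intro he
      have he' : (((t:ℕ)+1 : ℕ) : ZMod n) = (j : ZMod n) := by push_cast; exact he
      have hm := (ZMod.natCast_eq_natCast_iff _ _ _).mp he'
      rw [Nat.ModEq, Nat.mod_eq_of_lt h2] at hm
      have ht := t.2
      rcases Nat.lt_or_ge ((t:ℕ)+1) n with hl | hl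
      · rw [Nat.mod_eq_of_lt hl] at hm; omega
      · have hh : (t:ℕ)+1 = n := by omega
        rw [hh, Nat.mod_self] at hm; omega
    rw [if_neg h, if_neg hc]

lemma fgen_zero (n : ℕ) (hn : 1 ≤ n) (m : Fin n → ℤ) (t : Fin n) :
    fgen n 0 m t = if (t:ℕ) = n - 1 then m ⟨0, by omega⟩ + 1 else m t := by
  have hne : NeZero n := ⟨by omega⟩
  show (if (((t:ℕ) : ZMod n) + 1 = (0 : ZMod n)) then _ else _) = _
  by_cases h : (t:ℕ) = n - 1
  · have h1 : (t:ℕ) + 1 = n := by have := t.2; omega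
    have hc : ((t:ℕ) : ZMod n) + 1 = (0 : ZMod n) := by
      have h3 : (((t:ℕ)+1 : ℕ) : ZMod n) = ((n:ℕ) : ZMod n) := by rw [h1]
      rw [ZMod.natCast_self] at h3
      push_cast at h3
      exact h3
    rw [if_pos hc, if_pos h, if_pos rfl]
    congr 1
    exact meq n m _ _ (by rw [h1, Nat.mod_self])
  · have hc : ¬ (((t:ℕ) : ZMod n) + 1 = (0 : ZMod n)) := by
      intro he
      have he' : (((t:ℕ)+1 : ℕ) : ZMod n) = ((0:ℕ) : ZMod n) := by push_cast; exact he
      have ht := t.2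
      have := natCast_zmod_inj n hn (by omega : (t:ℕ)+1 < n) (by omega : 0 < n) he'
      omega
    rw [if_neg hc, if_neg h]

lemma fmap_mul_apply (n : ℕ) (u v : FreeMonoid (ZMod n)) (m : Fin n → ℤ) :
    fmap n (u * v) m = fmap n u (fmap n v m) := by rw [map_mul]; rfl

lemma fmap_of_apply (n : ℕ) (c : ZMod n) (m : Fin n → ℤ) :
    fmap n (FreeMonoid.of c) m = fgen n c m := by
  rw [fmap, FreeMonoid.lift_eval_of]

lemma desc_one (n a b : ℕ) (h : a < b) : desc n a b = 1 := by
  unfold desc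
  rw [show a + 1 - b = 0 by omega]
  rfl

lemma desc_succ (n a b : ℕ) (h : b ≤ a + 1) :
    desc n (a+1) b = fx n (a+1) * desc n a b := by
  have hl : ((List.range' b ((a+1) + 1 - b)).map fun k => (k : ZMod n)).reverse
      = ((a+1 : ℕ) : ZMod n) :: ((List.range' b (a + 1 - b)).map fun k => (k : ZMod n)).reverse := by
    rw [show (a+1) + 1 - b = (a + 1 - b) + 1 by omega,
      show List.range' b (a+1-b+1) = List.range' b (a+1-b) ++ [b + (a+1-b)] from by
        simpa using List.range'_concat (step := 1) (s := b) (n := a+1-b),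
      show b + (a+1-b) = a+1 by omega]
    simp
  unfold desc fx
  rw [hl]
  rfl

lemma asc_zero (n : ℕ) : asc n 1 0 = 1 := rfl

lemma asc_succ (n i : ℕ) : asc n 1 (i+1) = asc n 1 i * fx n (i+1) := by
  have hl : (List.range' 1 ((i+1) + 1 - 1)).map (fun k => (k : ZMod n))
      = ((List.range' 1 (i + 1 - 1)).map fun k => (k : ZMod n)) ++ [((i+1 : ℕ) : ZMod n)] := by
    rw [show (i+1) + 1 - 1 = (i + 1 - 1) + 1 by omega,
      show List.range' 1 (i+1-1+1) = List.range' 1 (i+1-1) ++ [1 + (i+1-1)] from by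
        simpa using List.range'_concat (step := 1) (s := 1) (n := i+1-1),
      show 1 + (i+1-1) = i+1 by omega]
    simp
  unfold asc fx
  rw [hl]
  rfl

lemma desc_apply (n : ℕ) (hn : 1 ≤ n) (b : ℕ) (hb : 1 ≤ b) (a : ℕ) : a < n →
    ∀ (m : Fin n → ℤ) (t : Fin n),
    fmap n (desc n a b) m t =
      if b ≤ (t:ℕ)+1 ∧ (t:ℕ)+1 ≤ a then m ⟨((t:ℕ)+1) % n, Nat.mod_lt _ (by omega)⟩
      else m t := by
  induction a with
  | zero =>
    intro _ m t
    rw [desc_one n 0 b (by omega), if_neg (by omega), map_one]; rfl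
  | succ a ih =>
    intro ha m t
    by_cases hba : b ≤ a + 1
    · rw [desc_succ n a b hba, fmap_mul_apply]
      unfold fx
      rw [fmap_of_apply]
      rw [fgen_lt n hn (a+1) (by omega) ha]
      simp only [ih (by omega) m]
      split_ifs <;>
        first
          | rfl
          | omega
          | exact meq n m _ _ (by omega)
          | (simp only [Nat.mod_eq_of_lt (show (t:ℕ)+1 < n by omega)]
             first | rfl | exact meq n m _ _ (by omega))
          | (simp only [Nat.mod_eq_of_lt (show a+1+1 < n by omega)]
             first | rfl | exact meq n m _ _ (by omega))
    · rw [desc_one n (a+1) b (by omega), map_one, if_neg (by omega)]; rfl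

lemma asc_apply (n : ℕ) (hn : 1 ≤ n) (i : ℕ) : i < n →
    ∀ (m : Fin n → ℤ) (t : Fin n),
    fmap n (asc n 1 i) m t =
      if (t:ℕ)+1 ≤ i then m ⟨i % n, Nat.mod_lt _ (by omega)⟩ else m t := by
  induction i with
  | zero => intro _ m t; rw [asc_zero, map_one, if_neg (by omega)]; rfl
  | succ i ih =>
    intro hi m t
    rw [asc_succ, fmap_mul_apply]
    unfold fx
    rw [fmap_of_apply, ih (by omega)]
    simp only [fgen_lt n hn (i+1) (by omega) hi m]
    simp only [Nat.mod_eq_of_lt (show i < n by omega),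
      Nat.mod_eq_of_lt (show i+1 < n by omega)]
    split_ifs <;>
      first
        | rfl
        | omega
        | exact meq n m _ _ (by omega)

lemma g_apply (n : ℕ) (hn : 3 ≤ n) (i : ℕ) (hi : i ≤ n-2) (m : Fin n → ℤ) (t : Fin n) :
    fmap n (fx n n * qw n i) m t =
      if (t:ℕ) = n-1 then m ⟨i+1, by omega⟩ + 1
      else if (t:ℕ) ≤ i then m ⟨i+1, by omega⟩
      else m ⟨((t:ℕ)+1) % n, Nat.mod_lt _ (by omega)⟩ := by
  have hn1 : 1 ≤ n := by omega
  have hi1 : i + 1 < n := by omega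
  have hi0 : i < n := by omega
  rw [fmap_mul_apply]
  unfold qw
  have hD := desc_apply n hn1 (i+1) (by omega) (n-1) (by omega) m
  set D := fmap n (desc n (n-1) (i+1)) m with hDdef
  rw [fmap_mul_apply]
  have hA := asc_apply n hn1 i (by omega) D
  set A := fmap n (asc n 1 i) D with hAdef
  have hDval : ∀ (x : ℕ) (hx : x < n) (hx1 : x + 1 < n), i ≤ x → x + 1 ≤ n-1 →
      D ⟨x, hx⟩ = m ⟨x+1, hx1⟩ := by
    intro x hx hx1 h1 h2
    rw [hD ⟨x, hx⟩, if_pos]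
    · exact meq n m _ _ (by simp only [Fin.val_mk]; exact Nat.mod_eq_of_lt (by omega))
    · constructor <;> (simp only [Fin.val_mk]; omega)
  have him : i % n = i := Nat.mod_eq_of_lt hi0
  simp only [him] at hA
  have hDi : D ⟨i, hi0⟩ = m ⟨i+1, hi1⟩ := hDval i hi0 hi1 le_rfl (by omega)
  have hAval : ∀ s : Fin n, (s:ℕ) ≤ n - 2 → ∀ (hs1 : (s:ℕ)+1 < n),
      A s = if (s:ℕ) ≤ i then m ⟨i+1, hi1⟩ else m ⟨(s:ℕ)+1, hs1⟩ := by
    intro s hs hs1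
    rw [hA s]
    by_cases h2 : (s:ℕ)+1 ≤ i
    · rw [if_pos h2, if_pos (show (s:ℕ) ≤ i by omega), hDi]
    · rw [if_neg h2]
      by_cases h3 : (s:ℕ) ≤ i
      · rw [if_pos h3]
        have hclaim : D s = m ⟨(s:ℕ)+1, hs1⟩ := hDval (s:ℕ) s.2 hs1 (by omega) (by omega)
        rw [hclaim]
        exact meq n m _ _ (by omega)
      · rw [if_neg h3]
        exact hDval (s:ℕ) s.2 hs1 (by omega) (by omega)
  unfold fx
  rw [show ((n:ℕ) : ZMod n) = 0 from ZMod.natCast_self n, fmap_of_apply,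
    fgen_zero n hn1 A t]
  by_cases h1 : (t:ℕ) = n-1
  · rw [if_pos h1, if_pos h1]
    congr 1
    have hz : 0 < n := by omega
    have hs0 : (((⟨0, hz⟩ : Fin n)) : ℕ) ≤ n - 2 := by simp only [Fin.val_mk]; omega
    have hs0' : (((⟨0, hz⟩ : Fin n)) : ℕ) + 1 < n := by simp only [Fin.val_mk]; omega
    have h0 : A ⟨0, hz⟩ = m ⟨i+1, hi1⟩ := by
      rw [hAval ⟨0, hz⟩ hs0 hs0', if_pos]
      simp only [Fin.val_mk]
      exact Nat.zero_le i
    exact h0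
  · have ht2 := t.2
    rw [if_neg h1, if_neg h1, hAval t (by omega) (by omega)]
    by_cases h2 : (t:ℕ) ≤ i
    · rw [if_pos h2, if_pos h2]
    · rw [if_neg h2, if_neg h2]
      exact meq n m _ _ (Nat.mod_eq_of_lt (show (t:ℕ)+1 < n by omega)).symm

lemma g_high (n : ℕ) (hn : 3 ≤ n) (i : ℕ) (hi : i ≤ n-2) (m m' : Fin n → ℤ)
    (h : ∀ t : Fin n, i+1 ≤ (t:ℕ) → m t = m' t) :
    fmap n (fx n n * qw n i) m = fmap n (fx n n * qw n i) m' := by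
  funext t
  rw [g_apply n hn i hi, g_apply n hn i hi]
  by_cases h1 : (t:ℕ) = n-1
  · rw [if_pos h1, if_pos h1]
    have := h ⟨i+1, by omega⟩ (by simp only [Fin.val_mk]; omega)
    rw [this]
  · rw [if_neg h1, if_neg h1]
    by_cases h2 : (t:ℕ) ≤ i
    · rw [if_pos h2, if_pos h2]
      exact h ⟨i+1, by omega⟩ (by simp only [Fin.val_mk]; omega)
    · rw [if_neg h2, if_neg h2]
      refine h _ ?_
      show i + 1 ≤ ((t:ℕ)+1) % n
      have ht2 := t.2
      rw [Nat.mod_eq_of_lt (by omega)]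
      omega

lemma g_inj (n : ℕ) (hn : 3 ≤ n) (i : ℕ) (hi : i ≤ n-2) (m m' : Fin n → ℤ)
    (h : ∀ t : Fin n, i+1 ≤ (t:ℕ) →
      fmap n (fx n n * qw n i) m t = fmap n (fx n n * qw n i) m' t) :
    ∀ t : Fin n, i+1 ≤ (t:ℕ) → m t = m' t := by
  intro t ht
  have ht2 := t.2
  by_cases h1 : (t:ℕ) = i+1
  · have hkey := h ⟨n-1, by omega⟩ (by simp only [Fin.val_mk]; omega)
    rw [g_apply n hn i hi, g_apply n hn i hi] at hkey
    rw [if_pos (by simp only [Fin.val_mk]), if_pos (by simp only [Fin.val_mk])] at hkey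
    have hm : m ⟨i+1, by omega⟩ = m' ⟨i+1, by omega⟩ := by
      exact add_right_cancel hkey
    have hte : t = (⟨i+1, by omega⟩ : Fin n) := Fin.ext h1
    rw [hte]
    exact hm
  · have hkey := h ⟨(t:ℕ)-1, by omega⟩ (by simp only [Fin.val_mk]; omega)
    rw [g_apply n hn i hi, g_apply n hn i hi] at hkey
    rw [if_neg (by simp only [Fin.val_mk]; omega), if_neg (by simp only [Fin.val_mk]; omega),
      if_neg (by simp only [Fin.val_mk]; omega), if_neg (by simp only [Fin.val_mk]; omega)] at hkey
    have hidx : ((((⟨(t:ℕ)-1, by omega⟩ : Fin n) : ℕ))+1) % n = (t:ℕ) := by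
      simp only [Fin.val_mk]
      rw [show ((t:ℕ)-1)+1 = (t:ℕ) by omega, Nat.mod_eq_of_lt ht2]
    rw [meq n m _ ht2 hidx, meq n m' _ ht2 hidx] at hkey
    exact hkey


end lemmas

/-- Lemma 3.6 (lem11): `f((x_n q_i)^k)` depends on exactly the coordinates
`i+2, …, n` (1-indexed), i.e. on the `Fin n` indices `t` with `i + 1 ≤ t`. -/
theorem stmt7 (n i k : ℕ) (hn : 3 ≤ n) (hi : i ≤ n - 2) (hk : 1 ≤ k) :
    (∀ m m' : Fin n → ℤ, (∀ t : Fin n, i + 1 ≤ (t : ℕ) → m t = m' t) →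
      fmap n ((fx n n * qw n i) ^ k) m = fmap n ((fx n n * qw n i) ^ k) m') ∧
    (∀ c : Fin n, i + 1 ≤ (c : ℕ) →
      ∃ m m' : Fin n → ℤ, (∀ t : Fin n, t ≠ c → m t = m' t) ∧
        fmap n ((fx n n * qw n i) ^ k) m ≠ fmap n ((fx n n * qw n i) ^ k) m') := by
  have hpow : ∀ j (m : Fin n → ℤ), fmap n ((fx n n * qw n i) ^ j) m
      = ((fmap n (fx n n * qw n i)) ^ j) m := by
    intro j m; rw [map_pow]
  have hinj : ∀ j (m m' : Fin n → ℤ),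
      ((fmap n (fx n n * qw n i)) ^ j) m = ((fmap n (fx n n * qw n i)) ^ j) m' →
      ∀ t : Fin n, i+1 ≤ (t:ℕ) → m t = m' t := by
    intro j
    induction j with
    | zero => intro m m' h t ht; exact congrFun h t
    | succ j ih =>
      intro m m' h t ht
      rw [pow_succ] at h
      have h' : ((fmap n (fx n n * qw n i)) ^ j) (fmap n (fx n n * qw n i) m)
          = ((fmap n (fx n n * qw n i)) ^ j) (fmap n (fx n n * qw n i) m') := h
      exact g_inj n hn i hi m m' (ih _ _ h') t ht
  constructor
  · intro m m' h
    rw [hpow, hpow]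
    obtain ⟨k', rfl⟩ : ∃ k', k = k' + 1 := ⟨k - 1, by omega⟩
    rw [pow_succ]
    show ((fmap n (fx n n * qw n i)) ^ k') (fmap n (fx n n * qw n i) m)
      = ((fmap n (fx n n * qw n i)) ^ k') (fmap n (fx n n * qw n i) m')
    rw [g_high n hn i hi m m' h]
  · intro c hc
    refine ⟨(fun _ => 0), (fun t => if t = c then 1 else 0), fun t htc => by simp [htc], ?_⟩
    intro h
    rw [hpow, hpow] at h
    have := hinj k _ _ h c hc
    simp at this


end HK
end

section
/- Let n ≥ 3. The complement C_n ∖ I_{−1} is finite; that is, the set of elements w ∈ C_n such that w ∉ I_0 and w is not of the form u (x_n q_0) v with u, v ∈ C_n, is finite. -/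
namespace HK

/-! ### Auxiliary development for `stmt11` -/

/-- Weak cyclic descent relation on letters: `b` equals `a` or `a - 1`. -/
def Ok (n : ℕ) (a b : ZMod n) : Prop := a = b ∨ a = b + 1

/-- Weakly descending word. -/
def WD (n : ℕ) (l : List (ZMod n)) : Prop := l.Chain' (Ok n)

lemma one_ne_zero' {n : ℕ} (hn : 3 ≤ n) : (1 : ZMod n) ≠ 0 := by
  haveI : NeZero n := ⟨by omega⟩
  have : ((1 : ℕ) : ZMod n) ≠ 0 := by
    rw [Ne, ZMod.natCast_eq_zero_iff]
    intro h
    have := Nat.le_of_dvd one_pos h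
    omega
  simpa using this

lemma two_ne_zero' {n : ℕ} (hn : 3 ≤ n) : (2 : ZMod n) ≠ 0 := by
  haveI : NeZero n := ⟨by omega⟩
  have : ((2 : ℕ) : ZMod n) ≠ 0 := by
    rw [Ne, ZMod.natCast_eq_zero_iff]
    intro h
    have := Nat.le_of_dvd (by norm_num) h
    omega
  simpa using this

lemma not_ok_ascent {n : ℕ} (hn : 3 ≤ n) (a : ZMod n) : ¬ Ok n a (a + 1) := by
  rintro (h | h)
  · exact one_ne_zero' hn (left_eq_add.mp h)
  · rw [add_assoc] at h
    have := left_eq_add.mp h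
    rw [show (1 : ZMod n) + 1 = 2 by norm_num] at this
    exact two_ne_zero' hn this

/-- The invariant relation: a congruence under which weak descent is invariant. -/
def InvRel (n : ℕ) (x y : FreeMonoid (ZMod n)) : Prop :=
  (WD n x.toList ↔ WD n y.toList) ∧
  (WD n x.toList → x.toList.head? = y.toList.head? ∧ x.toList.getLast? = y.toList.getLast?)

lemma invRel_refl (n : ℕ) (x : FreeMonoid (ZMod n)) : InvRel n x x :=
  ⟨Iff.rfl, fun _ => ⟨rfl, rfl⟩⟩

lemma invRel_symm {n : ℕ} {x y : FreeMonoid (ZMod n)} (h : InvRel n x y) : InvRel n y x := by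
  refine ⟨h.1.symm, fun hy => ?_⟩
  obtain ⟨h1, h2⟩ := h.2 (h.1.mpr hy)
  exact ⟨h1.symm, h2.symm⟩

lemma invRel_trans {n : ℕ} {x y z : FreeMonoid (ZMod n)}
    (h : InvRel n x y) (h' : InvRel n y z) : InvRel n x z := by
  refine ⟨h.1.trans h'.1, fun hx => ?_⟩
  obtain ⟨h1, h2⟩ := h.2 hx
  obtain ⟨h1', h2'⟩ := h'.2 (h.1.mp hx)
  exact ⟨h1.trans h1', h2.trans h2'⟩

lemma wd_append {n : ℕ} {l₁ l₂ : List (ZMod n)} :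
    WD n (l₁ ++ l₂) ↔ WD n l₁ ∧ WD n l₂ ∧
      ∀ x ∈ l₁.getLast?, ∀ y ∈ l₂.head?, Ok n x y :=
  List.isChain_append

lemma invRel_mul {n : ℕ} {w x y z : FreeMonoid (ZMod n)}
    (h : InvRel n w x) (h' : InvRel n y z) : InvRel n (w * y) (x * z) := by
  have hiff : WD n (w * y).toList ↔ WD n (x * z).toList := by
    rw [FreeMonoid.toList_mul, FreeMonoid.toList_mul, wd_append, wd_append]
    constructor
    · rintro ⟨hw, hy, hb⟩
      obtain ⟨hh, hl⟩ := h.2 hw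
      obtain ⟨hh', hl'⟩ := h'.2 hy
      exact ⟨h.1.mp hw, h'.1.mp hy, by rw [← hl, ← hh']; exact hb⟩
    · rintro ⟨hx, hz, hb⟩
      have hw := h.1.mpr hx
      have hy := h'.1.mpr hz
      obtain ⟨hh, hl⟩ := h.2 hw
      obtain ⟨hh', hl'⟩ := h'.2 hy
      exact ⟨hw, hy, by rw [hl, hh']; exact hb⟩
  refine ⟨hiff, fun hwy => ?_⟩
  have hwy' := hwy
  rw [FreeMonoid.toList_mul] at hwy'
  obtain ⟨hw, hy, -⟩ := wd_append.mp hwy'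
  obtain ⟨hh, hl⟩ := h.2 hw
  obtain ⟨hh', hl'⟩ := h'.2 hy
  constructor
  · rw [FreeMonoid.toList_mul, FreeMonoid.toList_mul, List.head?_append, List.head?_append,
      hh, hh']
  · rw [FreeMonoid.toList_mul, FreeMonoid.toList_mul, List.getLast?_append, List.getLast?_append,
      hl, hl']

def invCon (n : ℕ) : Con (FreeMonoid (ZMod n)) where
  r := InvRel n
  iseqv := ⟨invRel_refl n, invRel_symm, invRel_trans⟩
  mul' := invRel_mul

lemma toList_pair {n : ℕ} (a b : ZMod n) :
    (FreeMonoid.of a * FreeMonoid.of b).toList = [a, b] := rfl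

lemma toList_triple {n : ℕ} (a b c : ZMod n) :
    (FreeMonoid.of a * FreeMonoid.of b * FreeMonoid.of c).toList = [a, b, c] := rfl

lemma wd_pair {n : ℕ} (a b : ZMod n) :
    WD n [a, b] ↔ Ok n a b := List.isChain_pair

lemma rel_le_inv {n : ℕ} (hn : 3 ≤ n) :
    ∀ x y, cnRel n x y → (invCon n) x y := by
  intro x y hxy
  rcases hxy with ⟨a, rfl, rfl⟩ | ⟨a, b, hba, hab, rfl, rfl⟩ | ⟨a, hw, rfl⟩
  · refine ⟨⟨fun _ => List.isChain_singleton a, fun _ => (wd_pair a a).mpr (Or.inl rfl)⟩,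
      fun _ => ⟨rfl, rfl⟩⟩
  · have hx : WD n (FreeMonoid.of a * FreeMonoid.of b).toList ↔ a = b := by
      rw [toList_pair, wd_pair]
      exact ⟨fun h => h.resolve_right fun h' => absurd h' hab, Or.inl⟩
    have hy : WD n (FreeMonoid.of b * FreeMonoid.of a).toList ↔ b = a := by
      rw [toList_pair, wd_pair]
      exact ⟨fun h => h.resolve_right fun h' => absurd h' hba, Or.inl⟩
    refine ⟨by rw [hx, hy]; exact eq_comm, fun hw => ?_⟩
    have : a = b := hx.mp hw
    subst this
    exact ⟨rfl, rfl⟩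
  · have hyn : ¬ WD n (FreeMonoid.of a * FreeMonoid.of (a + 1)).toList := by
      rw [toList_pair, wd_pair]
      exact not_ok_ascent hn a
    have hxn : ¬ WD n x.toList := by
      rcases hw with rfl | rfl
      · rw [toList_triple]
        intro h
        exact not_ok_ascent hn a (List.isChain_cons_cons.mp h).1
      · rw [toList_triple]
        intro h
        exact not_ok_ascent hn a (List.isChain_cons_cons.mp (List.isChain_cons_cons.mp h).2).1
    exact ⟨iff_of_false hxn hyn, fun h => absurd h hxn⟩

/-- The explicit list of letters of `x_n q_0`, as a map over `range n`. -/
def thetaL (n : ℕ) : List (ZMod n) := (List.range n).map fun j => ((n - j : ℕ) : ZMod n)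

lemma toList_theta {n : ℕ} (hn : 3 ≤ n) : (fx n n * qw n 0).toList = thetaL n := by
  have h1 : n - 1 + 1 = n := by omega
  have lhs : (fx n n * qw n 0).toList =
      ((n : ℕ) : ZMod n) ::
        (((List.range' 1 (n - 1)).map fun k : ℕ => ((k : ℕ) : ZMod n)).reverse) := by
    rw [qw, FreeMonoid.toList_mul, FreeMonoid.toList_mul, fx, asc, desc,
      FreeMonoid.toList_of, FreeMonoid.toList_ofList, FreeMonoid.toList_ofList]
    norm_num
    exact List.map_eq_flatMap.symm
  rw [lhs, ← List.map_reverse, List.reverse_range']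
  rw [thetaL, show List.range n = List.range (n - 1 + 1) by rw [h1],
    List.range_succ_eq_map, List.map_cons, List.map_map, List.map_map]
  refine List.cons_eq_cons.mpr ⟨?_, ?_⟩
  · simp [h1]
  · refine List.map_congr_left ?_
    intro i _
    simp only [Function.comp_apply]
    congr 1
    omega

lemma theta_length {n : ℕ} : (thetaL n).length = n := by simp [thetaL]

lemma theta_head {n : ℕ} (hn : 3 ≤ n) : (thetaL n).head? = some 0 := by
  have h1 : n - 1 + 1 = n := by omega
  rw [thetaL, show List.range n = List.range (n - 1 + 1) by rw [h1],
    List.range_succ_eq_map, List.map_cons]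
  rw [List.head?_cons]
  congr 1
  rw [Nat.sub_zero, ZMod.natCast_self]

lemma theta_last {n : ℕ} (hn : 3 ≤ n) : (thetaL n).getLast? = some 1 := by
  have h1 : n - 1 + 1 = n := by omega
  rw [thetaL, show List.range n = List.range (n - 1 + 1) by rw [h1],
    List.range_succ, List.map_append]
  rw [show List.map (fun j => ((n - j : ℕ) : ZMod n)) [n - 1] = [((n - (n - 1) : ℕ) : ZMod n)]
      from rfl]
  rw [List.getLast?_concat]
  congr 1
  rw [show n - (n - 1) = 1 by omega, Nat.cast_one]

lemma theta_wd {n : ℕ} (hn : 3 ≤ n) : WD n (thetaL n) := by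
  rw [WD, thetaL, List.Chain', List.isChain_iff_getElem]
  intro i hi
  simp only [List.length_map, List.length_range] at hi
  simp only [List.get_eq_getElem, List.getElem_map, List.getElem_range]
  refine Or.inr ?_
  rw [show n - i = (n - (i + 1)) + 1 by omega, Nat.cast_add, Nat.cast_one]

lemma theta_pow_wd {n : ℕ} (hn : 3 ≤ n) (k : ℕ) :
    WD n (((fx n n * qw n 0) ^ k).toList) ∧
      (((fx n n * qw n 0) ^ k).toList.getLast? = none ∨
        ((fx n n * qw n 0) ^ k).toList.getLast? = some 1) := by
  induction k with
  | zero => exact ⟨List.isChain_nil, Or.inl rfl⟩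
  | succ k ih =>
    rw [pow_succ, FreeMonoid.toList_mul, toList_theta hn]
    constructor
    · refine List.IsChain.append ih.1 (theta_wd hn) ?_
      intro x hx y hy
      rcases ih.2 with hnone | hsome
      · rw [hnone] at hx; simp at hx
      · rw [hsome] at hx
        rw [theta_head hn] at hy
        simp only [Option.mem_def, Option.some.injEq] at hx hy
        subst hx; subst hy
        exact Or.inr (by rw [zero_add])
    · rw [List.getLast?_append, theta_last hn]
      exact Or.inr rfl

/-- Basic relation steps inside the generated congruence. -/
lemma conGen_base {n : ℕ} {x y : FreeMonoid (ZMod n)} (h : cnRel n x y) :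
    (conGen (cnRel n)) x y :=
  ConGen.Rel.of x y h

/-- Contraction of a weakly descending word to a strictly descending word. -/
lemma contract {n : ℕ} :
    ∀ l : List (ZMod n), WD n l →
      ∃ m : List (ZMod n), List.Chain' (fun a b : ZMod n => a = b + 1) m ∧
        (conGen (cnRel n)) (FreeMonoid.ofList l) (FreeMonoid.ofList m) ∧
        m.head? = l.head? := by
  intro l
  induction l with
  | nil => exact fun _ => ⟨[], List.isChain_nil, (conGen (cnRel n)).refl _, rfl⟩
  | cons a t ih =>
    intro h
    obtain ⟨hOk, ht⟩ := List.isChain_cons.mp h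
    obtain ⟨m, hchain, hrel, hhead⟩ := ih ht
    have hrel1 : (conGen (cnRel n)) (FreeMonoid.ofList (a :: t)) (FreeMonoid.ofList (a :: m)) := by
      rw [FreeMonoid.ofList_cons, FreeMonoid.ofList_cons]
      exact (conGen (cnRel n)).mul ((conGen (cnRel n)).refl _) hrel
    cases m with
    | nil => exact ⟨[a], List.isChain_singleton a, hrel1, rfl⟩
    | cons b rest =>
      have hab : Ok n a b := hOk b (by rw [← hhead]; rfl)
      rcases hab with heq | hsucc
      · subst heq
        refine ⟨a :: rest, hchain, ?_, rfl⟩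
        refine (conGen (cnRel n)).trans hrel1 ?_
        have : FreeMonoid.ofList (a :: a :: rest) =
            (FreeMonoid.of a * FreeMonoid.of a) * FreeMonoid.ofList rest := by
          rw [FreeMonoid.ofList_cons, FreeMonoid.ofList_cons, mul_assoc]
        rw [this, FreeMonoid.ofList_cons]
        exact (conGen (cnRel n)).mul (conGen_base (Or.inl ⟨a, rfl, rfl⟩))
          ((conGen (cnRel n)).refl _)
      · exact ⟨a :: b :: rest, List.isChain_cons_cons.mpr ⟨hsucc, hchain⟩, hrel1, rfl⟩

/-- A strictly descending word is determined by its head. -/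
lemma desc_map {n : ℕ} :
    ∀ (m : List (ZMod n)) (c : ZMod n), List.Chain' (fun a b : ZMod n => a = b + 1) m →
      m.head? = some c → m = (List.range m.length).map (fun j => c - (j : ℕ)) := by
  intro m
  induction m with
  | nil => intro c _ h; simp at h
  | cons a t ih =>
    intro c hchain hhead
    have hac : a = c := by simpa using hhead
    subst hac
    cases t with
    | nil => simp [List.range_succ]
    | cons b rest =>
      obtain ⟨hab, hchain'⟩ := List.isChain_cons_cons.mp hchain
      have ht : b :: rest = (List.range (b :: rest).length).map (fun j => b - (j : ℕ)) :=
        ih b hchain' rfl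
      have hb : b = a - 1 := by rw [hab]; ring
      show a :: (b :: rest) = _
      conv_rhs => rw [show (a :: b :: rest).length = (b :: rest).length + 1 from rfl,
        List.range_succ_eq_map]
      rw [List.map_cons, List.map_map]
      refine List.cons_eq_cons.mpr ⟨?_, ?_⟩
      · simp
      · conv_lhs => rw [ht]
        refine List.map_congr_left ?_
        intro i _
        simp only [Function.comp_apply]
        rw [hb]
        push_cast
        ring

/-- Corollary 3.16 (I-1): `C_n / I_{-1}` is finite, i.e. `C_n ∖ I_{-1}` is a finite set. -/
theorem stmt11 (n : ℕ) (hn : 3 ≤ n) :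
    {w : Cn n | w ∉ Iset n 0 ∧
      ¬ ∃ u v : Cn n, w = u * pr n (fx n n * qw n 0) * v}.Finite := by
  classical
  haveI : NeZero n := ⟨by omega⟩
  apply Set.Finite.subset
    (Set.Finite.image (fun l : List (ZMod n) => pr n (FreeMonoid.ofList l))
      (List.finite_length_le (ZMod n) (2 * n)))
  rintro w ⟨h1, h2⟩
  obtain ⟨u, v, k, hk, heq⟩ := not_not.mp h1
  obtain ⟨U, hU⟩ := Con.mk'_surjective u
  obtain ⟨V, hV⟩ := Con.mk'_surjective v
  obtain ⟨W, hW⟩ := Con.mk'_surjective w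
  have hEq2 : pr n (U * W * V) = pr n ((fx n n * qw n 0) ^ k) := by
    rw [map_mul, map_mul, map_pow]
    show (conGen (cnRel n)).mk' U * (conGen (cnRel n)).mk' W * (conGen (cnRel n)).mk' V = _
    rw [hU, hV, hW]
    exact heq
  have hcon : (conGen (cnRel n)) (U * W * V) ((fx n n * qw n 0) ^ k) :=
    ((conGen (cnRel n)).eq).mp hEq2
  have hinv : InvRel n (U * W * V) ((fx n n * qw n 0) ^ k) :=
    (Con.conGen_le.mpr (rel_le_inv hn)) hcon
  have hWD : WD n (U * W * V).toList := hinv.1.mpr (theta_pow_wd hn k).1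
  have hWDW : WD n W.toList := by
    rw [FreeMonoid.toList_mul, FreeMonoid.toList_mul] at hWD
    exact (List.isChain_append.mp (List.isChain_append.mp hWD).1).2.1
  obtain ⟨m, hchain, hrel, hhead⟩ := contract W.toList hWDW
  have hwm : w = pr n (FreeMonoid.ofList m) := by
    rw [← hW]
    exact ((conGen (cnRel n)).eq).mpr hrel
  by_cases hlen : m.length ≤ 2 * n
  · exact ⟨m, hlen, hwm.symm⟩
  · exfalso
    apply h2
    push_neg at hlen
    -- m is long, strictly descending: it contains thetaL literally
    have hmne : m ≠ [] := by
      intro h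
      rw [h] at hlen
      simp only [List.length_nil] at hlen
      omega
    obtain ⟨c, hc⟩ : ∃ c, m.head? = some c := by
      cases m with
      | nil => exact absurd rfl hmne
      | cons a t => exact ⟨a, rfl⟩
    have hmap := desc_map m c hchain hc
    set L := m.length with hL
    set d := c.val with hd
    have hdn : d < n := ZMod.val_lt c
    have hdL : d + n ≤ L := by
      have : 2 * n < L := hlen
      omega
    -- decompose
    have hdecomp : m = m.take d ++ ((m.drop d).take n ++ (m.drop d).drop n) := by
      rw [List.take_append_drop n (m.drop d), List.take_append_drop d m]
    have hmidlen : ((m.drop d).take n).length = n := by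
      rw [List.length_take, List.length_drop]
      omega
    have hmid : (m.drop d).take n = thetaL n := by
      apply List.ext_getElem
      · rw [hmidlen, theta_length]
      · intro i hi1 hi2
        rw [hmidlen] at hi1
        have hiL : d + i < L := by omega
        have h3 : ((m.drop d).take n)[i] = m[d + i]'(hiL) := by
          rw [List.getElem_take, List.getElem_drop]
        rw [h3]
        have h4 : m[d + i]'(hiL) = c - ((d + i : ℕ) : ZMod n) := by
          simp only [hmap, List.getElem_map, List.getElem_range]
        rw [h4]
        have h5 : (thetaL n)[i] = ((n - i : ℕ) : ZMod n) := by
          simp [thetaL]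
        rw [h5]
        have hcd : ((d : ℕ) : ZMod n) = c := ZMod.natCast_rightInverse c
        rw [Nat.cast_add, ← hcd]
        rw [Nat.cast_sub (le_of_lt hi1), ZMod.natCast_self]
        ring
    refine ⟨pr n (FreeMonoid.ofList (m.take d)), pr n (FreeMonoid.ofList ((m.drop d).drop n)), ?_⟩
    rw [hwm]
    conv_lhs => rw [hdecomp]
    rw [FreeMonoid.ofList_append, FreeMonoid.ofList_append, map_mul, map_mul, hmid]
    have : FreeMonoid.ofList (thetaL n) = fx n n * qw n 0 := by
      rw [← toList_theta hn, FreeMonoid.ofList_toList]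
    rw [this, mul_assoc]

end HK
end
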